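/- arXiv:1212.5142 — 9 statements merged into one kernel-verified Lean document; each statement's English description precedes it below -/
import Mathlib

section
/- Let P* be a positive equilibrium and q_{ij} ≥ 0 satisfy the balance condition ∑_{j≠i} q_{ij} p*_j = (∑_{j≠i} q_{ji}) p*_i. Then along solutions of the Kolmogorov equation, the quadratic divergence H_2(P‖P*) = ∑_i (p_i − p*_i)²/p*_i has time derivative dH_2/dt = −∑_{i≠j} q_{ij} p*_j (p_i/p*_i − p_j/p*_j)² ≤ 0. -/
/-!
Write `xᵢ = pᵢ/p*ᵢ`. Since the flux `∑_{j≠i} (q_{ij} p_j − q_{ji} p_i)` sums to zero over `i`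
(probability is conserved), `dH₂/dt = 2 ∑ᵢ xᵢ ṗᵢ`. Expanding the square in the Dirichlet form
`∑_{i≠j} q_{ij} p*_j (xᵢ − x_j)²`, the balance condition turns the `xᵢ²` terms and relabelling
`i ↔ j` turns the `x_j²` terms into the same sum `∑_{i≠j} q_{ji} p*_i xᵢ²`, and what remains is
`−2 ∑ᵢ xᵢ ṗᵢ`.
-/

open Finset

section OffDiagonal

variable {ι : Type*} [Fintype ι] [DecidableEq ι]

theorem Finset.sum_sum_erase_comm {M : Type*} [AddCommMonoid M] (f : ι → ι → M) :
    ∑ i, ∑ j ∈ univ.erase i, f i j = ∑ i, ∑ j ∈ univ.erase i, f j i :=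
  sum_comm' fun i j => by simp [ne_comm]

variable {R : Type*} [CommRing R]

theorem sum_sum_erase_flux_eq_zero (q : ι → ι → R) (p : ι → R) :
    ∑ i, ∑ j ∈ univ.erase i, (q i j * p j - q j i * p i) = 0 := by
  simp only [sum_sub_distrib]
  rw [sum_sum_erase_comm (fun i j => q i j * p j), sub_self]

theorem sum_mul_sum_erase_flux_eq_neg_sum_sq (q : ι → ι → R) (ps x : ι → R)
    (hbal : ∀ i, ∑ j ∈ univ.erase i, q i j * ps j = (∑ j ∈ univ.erase i, q j i) * ps i) :
    ∑ i, 2 * x i * ∑ j ∈ univ.erase i, (q i j * (ps j * x j) - q j i * (ps i * x i))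
      = -∑ i, ∑ j ∈ univ.erase i, q i j * ps j * (x i - x j) ^ 2 := by
  have hdiag : ∑ i, ∑ j ∈ univ.erase i, q i j * ps j * x i ^ 2
      = ∑ i, ∑ j ∈ univ.erase i, q j i * ps i * x i ^ 2 := by
    refine sum_congr rfl fun i _ => ?_
    rw [← sum_mul, hbal i, sum_mul, sum_mul]
  have hswap := sum_sum_erase_comm fun i j => q j i * ps i * x i ^ 2
  rw [eq_neg_iff_add_eq_zero]
  calc _ = ∑ i, ∑ j ∈ univ.erase i,
          ((q i j * ps j * x i ^ 2 - q j i * ps i * x i ^ 2)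
            + (q i j * ps j * x j ^ 2 - q j i * ps i * x i ^ 2)) := by
        simp only [mul_sum, ← sum_add_distrib]
        exact sum_congr rfl fun i _ => sum_congr rfl fun j _ => by ring
    _ = 0 := by
        simp only [sum_add_distrib, sum_sub_distrib, hdiag, sub_self, zero_add]
        rw [hswap, sub_self]

theorem sum_sum_erase_mul_sq_nonneg [LinearOrder R] [IsStrictOrderedRing R]
    (q : ι → ι → R) (ps x : ι → R) (hq : ∀ i j, i ≠ j → 0 ≤ q i j)
    (hps : ∀ i, 0 ≤ ps i) :
    0 ≤ ∑ i, ∑ j ∈ univ.erase i, q i j * ps j * (x i - x j) ^ 2 :=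
  sum_nonneg fun i _ => sum_nonneg fun j hj =>
    mul_nonneg (mul_nonneg (hq i j (ne_of_mem_erase hj).symm) (hps j)) (sq_nonneg _)

end OffDiagonal

theorem hasDerivAt_sum_sq_sub_div {ι : Type*} [Fintype ι] {p : ℝ → ι → ℝ} {v : ι → ℝ}
    {t : ℝ} (c : ι → ℝ) (hp : ∀ i, HasDerivAt (fun s => p s i) (v i) t) :
    HasDerivAt (fun s => ∑ i, (p s i - c i) ^ 2 / c i)
      (∑ i, 2 * ((p t i - c i) / c i) * v i) t := by
  refine HasDerivAt.fun_sum fun i _ => ?_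
  refine ((((hp i).sub_const (c i)).fun_pow 2).div_const (c i)).congr_deriv ?_
  push_cast
  ring

/-- Along solutions of the Kolmogorov equation of a Markov chain
with positive equilibrium `P*`, the quadratic divergence
`H₂(P‖P*) = ∑ᵢ (pᵢ − p*ᵢ)²/p*ᵢ` has time derivative
`−∑_{i≠j} q_{ij} p*_j (pᵢ/p*ᵢ − p_j/p*_j)² ≤ 0`. -/
theorem H2_time_derivative
    (n : ℕ) (q : Fin n → Fin n → ℝ) (ps : Fin n → ℝ) (p : ℝ → Fin n → ℝ) (t : ℝ)
    (hq : ∀ i j, i ≠ j → 0 ≤ q i j)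
    (hps : ∀ i, 0 < ps i)
    (hbal : ∀ i, ∑ j ∈ Finset.univ.erase i, q i j * ps j
        = (∑ j ∈ Finset.univ.erase i, q j i) * ps i)
    (hkol : ∀ i, HasDerivAt (fun s => p s i)
        (∑ j ∈ Finset.univ.erase i, (q i j * p t j - q j i * p t i)) t) :
    HasDerivAt (fun s => ∑ i, (p s i - ps i) ^ 2 / ps i)
        (-∑ i, ∑ j ∈ Finset.univ.erase i,
            q i j * ps j * (p t i / ps i - p t j / ps j) ^ 2) t ∧
    -∑ i, ∑ j ∈ Finset.univ.erase i,
        q i j * ps j * (p t i / ps i - p t j / ps j) ^ 2 ≤ 0 := by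
  have hx : ∀ i, ps i * (p t i / ps i) = p t i := fun i => mul_div_cancel₀ _ (hps i).ne'
  have hdirichlet := sum_mul_sum_erase_flux_eq_neg_sum_sq q ps (fun i => p t i / ps i) hbal
  simp only [hx] at hdirichlet
  refine ⟨(hasDerivAt_sum_sq_sub_div ps hkol).congr_deriv ?_,
    neg_nonpos.mpr (sum_sum_erase_mul_sq_nonneg q ps _ hq fun i => (hps i).le)⟩
  calc ∑ i, 2 * ((p t i - ps i) / ps i) * ∑ j ∈ univ.erase i, (q i j * p t j - q j i * p t i)
      = ∑ i, 2 * (p t i / ps i) * ∑ j ∈ univ.erase i, (q i j * p t j - q j i * p t i)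
        - 2 * ∑ i, ∑ j ∈ univ.erase i, (q i j * p t j - q j i * p t i) := by
        rw [mul_sum, ← sum_sub_distrib]
        refine sum_congr rfl fun i _ => ?_
        rw [sub_div, div_self (hps i).ne']
        ring
    _ = _ := by rw [sum_sum_erase_flux_eq_zero, hdirichlet, mul_zero, sub_zero]
end

section
/- Let h be strictly convex and differentiable on (0,∞), so that h' is strictly increasing and invertible with inverse g. Then a positive distribution P is the unique conditional minimizer of H_h(P‖P*) under the moment constraints ∑_j m_{rj} p_j = M_r if and only if p_j = p*_j g(∑_{r=0}^k λ_r m_{rj}) for some multipliers λ_r satisfying the moment equations. -/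
/-!
The objective `x ↦ ∑ᵢ p*ᵢ h(xᵢ/p*ᵢ)` is strictly convex on the positive orthant, and the feasible
set is the positive part of `p + ker A`, `A = (mᵣⱼ)`. Hence `p` is the unique minimiser iff
the gradient `(h'(pⱼ/p*ⱼ))ⱼ` annihilates `ker A`: necessity by differentiating along the lines
`p + t v`, `v ∈ ker A`, which stay feasible for small `t`; sufficiency by summing the strict
tangent-line inequalities of `h`. A vector annihilating `ker A` lies in the row space of `A`, so
`h'(pⱼ/p*ⱼ) = ∑ᵣ λᵣ mᵣⱼ`, and applying `g = (h')⁻¹` gives the parametrisation.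
-/

open Finset Filter Topology Matrix

theorem StrictConvexOn.add_deriv_mul_sub_lt {S : Set ℝ} {f : ℝ → ℝ} (hf : StrictConvexOn ℝ S f)
    {x y : ℝ} (hx : x ∈ S) (hy : y ∈ S) (hxy : x ≠ y) (hfx : DifferentiableAt ℝ f x) :
    f x + deriv f x * (y - x) < f y := by
  rcases hxy.lt_or_gt with hlt | hlt
  · have := hf.deriv_lt_slope hx hy hlt hfx
    rw [slope_def_field, lt_div_iff₀ (sub_pos.2 hlt)] at this
    linarith
  · have := hf.slope_lt_deriv hy hx hlt hfx
    rw [slope_def_field, div_lt_iff₀ (sub_pos.2 hlt)] at this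
    linarith

theorem StrictConvexOn.mul_div_add_deriv_mul_sub_lt {f : ℝ → ℝ}
    (hf : StrictConvexOn ℝ (Set.Ioi 0) f) {w a b : ℝ} (hw : 0 < w) (ha : 0 < a) (hb : 0 < b)
    (hab : a ≠ b) (hfa : DifferentiableAt ℝ f (a / w)) :
    w * f (a / w) + deriv f (a / w) * (b - a) < w * f (b / w) := by
  have hab' : a / w ≠ b / w := fun h => hab ((div_left_inj' hw.ne').1 h)
  calc w * f (a / w) + deriv f (a / w) * (b - a)
      = w * (f (a / w) + deriv f (a / w) * (b / w - a / w)) := by field_simp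
    _ < w * f (b / w) :=
      mul_lt_mul_of_pos_left (hf.add_deriv_mul_sub_lt (div_pos ha hw) (div_pos hb hw) hab' hfa) hw

theorem Matrix.exists_vecMul_eq_of_forall_mulVec_eq_zero {κ ι K : Type*} [Fintype κ] [Fintype ι]
    [Field K] {A : Matrix κ ι K} {c : ι → K} (h : ∀ v, A *ᵥ v = 0 → c ⬝ᵥ v = 0) :
    ∃ lam, lam ᵥ* A = c := by
  have hspan : dotProductBilin K K c ∈
      Submodule.span K (Set.range fun r => dotProductBilin K K (A r)) := by
    refine mem_span_of_iInf_ker_le_ker fun v hv => ?_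
    simp only [Submodule.mem_iInf, LinearMap.mem_ker, dotProductBilin_apply_apply] at hv ⊢
    exact h v (funext hv)
  classical
  obtain ⟨lam, hlam⟩ := (Submodule.mem_span_range_iff_exists_fun K).1 hspan
  refine ⟨lam, funext fun j => ?_⟩
  have := LinearMap.congr_fun hlam (Pi.single j 1)
  simp only [LinearMap.sum_apply, LinearMap.smul_apply, dotProductBilin_apply_apply,
    dotProduct_single, mul_one, smul_eq_mul] at this
  exact this

section Divergence

variable {ι : Type*} [Fintype ι]

/-- `H_h(x‖P*)` with `ps = P*`. -/
noncomputable def hDivergence (h : ℝ → ℝ) (ps x : ι → ℝ) : ℝ :=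
  ∑ i, ps i * h (x i / ps i)

noncomputable def hDivergenceGrad (h : ℝ → ℝ) (ps x : ι → ℝ) : ι → ℝ :=
  fun i => deriv h (x i / ps i)

variable {h : ℝ → ℝ} {ps p : ι → ℝ}

theorem hasDerivAt_hDivergence_add_smul (hdiff : ∀ x ∈ Set.Ioi (0 : ℝ), DifferentiableAt ℝ h x)
    (hps : ∀ i, 0 < ps i) (hp : ∀ i, 0 < p i) (v : ι → ℝ) :
    HasDerivAt (fun t : ℝ => hDivergence h ps (p + t • v)) (hDivergenceGrad h ps p ⬝ᵥ v) 0 := by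
  refine HasDerivAt.fun_sum fun i _ => ?_
  have hline : HasDerivAt (fun t : ℝ => (p + t • v) i / ps i) (v i / ps i) 0 := by
    simpa using (((hasDerivAt_id (0 : ℝ)).mul_const (v i)).const_add (p i)).div_const (ps i)
  have hh : HasDerivAt h (hDivergenceGrad h ps p i) ((p + (0 : ℝ) • v) i / ps i) := by
    simpa [hDivergenceGrad] using (hdiff _ (div_pos (hp i) (hps i))).hasDerivAt
  exact ((hh.comp 0 hline).const_mul (ps i)).congr_deriv (by field_simp [(hps i).ne'])

theorem hDivergenceGrad_dotProduct_eq_zero_of_isMinOn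
    (hdiff : ∀ x ∈ Set.Ioi (0 : ℝ), DifferentiableAt ℝ h x) (hps : ∀ i, 0 < ps i)
    (hp : ∀ i, 0 < p i) {κ : Type*} [Fintype κ] {A : Matrix κ ι ℝ}
    (hmin : IsMinOn (hDivergence h ps) {x | (∀ i, 0 < x i) ∧ A *ᵥ x = A *ᵥ p} p)
    {v : ι → ℝ} (hv : A *ᵥ v = 0) :
    hDivergenceGrad h ps p ⬝ᵥ v = 0 := by
  have hpos : ∀ᶠ t in 𝓝 (0 : ℝ), ∀ i, 0 < (p + t • v) i := eventually_all.2 fun i =>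
    continuousAt_const.eventually_lt (by fun_prop) (by simpa using hp i)
  have hloc : IsLocalMin (fun t : ℝ => hDivergence h ps (p + t • v)) 0 := by
    filter_upwards [hpos] with t ht
    simpa using isMinOn_iff.1 hmin _ ⟨ht, by rw [mulVec_add, mulVec_smul, hv, smul_zero, add_zero]⟩
  simpa using (hasDerivAt_hDivergence_add_smul hdiff hps hp v).deriv ▸ hloc.deriv_eq_zero

theorem hDivergence_lt_of_hDivergenceGrad_dotProduct_sub_eq_zero
    (hconv : StrictConvexOn ℝ (Set.Ioi 0) h)
    (hdiff : ∀ x ∈ Set.Ioi (0 : ℝ), DifferentiableAt ℝ h x) (hps : ∀ i, 0 < ps i)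
    (hp : ∀ i, 0 < p i) {x : ι → ℝ} (hx : ∀ i, 0 < x i)
    (hgrad : hDivergenceGrad h ps p ⬝ᵥ (x - p) = 0) (hxp : x ≠ p) :
    hDivergence h ps p < hDivergence h ps x := by
  have hterm : ∀ i, p i ≠ x i →
      ps i * h (p i / ps i) + hDivergenceGrad h ps p i * (x i - p i) < ps i * h (x i / ps i) :=
    fun i hi => hconv.mul_div_add_deriv_mul_sub_lt (hps i) (hp i) (hx i) hi
      (hdiff _ (div_pos (hp i) (hps i)))
  have hlin : ∑ i, hDivergenceGrad h ps p i * (x i - p i) = 0 := hgrad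
  obtain ⟨i₀, hi₀⟩ := Function.ne_iff.1 hxp
  calc hDivergence h ps p
      = ∑ i, (ps i * h (p i / ps i) + hDivergenceGrad h ps p i * (x i - p i)) := by
        rw [sum_add_distrib, hlin, add_zero]
        rfl
    _ < hDivergence h ps x := by
      refine sum_lt_sum (fun i _ => ?_) ⟨i₀, mem_univ _, hterm i₀ (Ne.symm hi₀)⟩
      rcases eq_or_ne (p i) (x i) with hi | hi
      · simp [hi]
      · exact (hterm i hi).le

end Divergence

theorem maxent_solution_parametrization_general
    (n k : ℕ)
    (h g : ℝ → ℝ)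
    (hconv : StrictConvexOn ℝ (Set.Ioi 0) h)
    (hdiff : ∀ x ∈ Set.Ioi (0 : ℝ), DifferentiableAt ℝ h x)
    (hg : ∀ x ∈ Set.Ioi (0 : ℝ), g (deriv h x) = x)
    (hg' : ∀ y, deriv h (g y) = y ∧ g y ∈ Set.Ioi (0 : ℝ))
    (ps : Fin n → ℝ) (hps : ∀ i, 0 < ps i)
    (m : Fin (k + 1) → Fin n → ℝ) (M : Fin (k + 1) → ℝ)
    (p : Fin n → ℝ) (hp : ∀ i, 0 < p i) :
    ((∀ r, ∑ j, m r j * p j = M r) ∧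
      ∀ x : Fin n → ℝ, (∀ i, 0 < x i) → (∀ r, ∑ j, m r j * x j = M r) → x ≠ p →
        ∑ i, ps i * h (p i / ps i) < ∑ i, ps i * h (x i / ps i))
    ↔ ∃ lam : Fin (k + 1) → ℝ,
        (∀ j, p j = ps j * g (∑ r, lam r * m r j)) ∧
        ∀ r, ∑ j, m r j * (ps j * g (∑ r', lam r' * m r' j)) = M r := by
  constructor
  · rintro ⟨hfeas, hmin⟩
    have hle : IsMinOn (hDivergence h ps) {x | (∀ i, 0 < x i) ∧ of m *ᵥ x = of m *ᵥ p} p := by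
      refine isMinOn_iff.2 fun x ⟨hx, hmx⟩ => ?_
      rcases eq_or_ne x p with rfl | hxp
      · exact le_rfl
      · exact (hmin x hx (fun r => (congrFun hmx r).trans (hfeas r)) hxp).le
    obtain ⟨lam, hlam⟩ := exists_vecMul_eq_of_forall_mulVec_eq_zero fun v hv =>
      hDivergenceGrad_dotProduct_eq_zero_of_isMinOn hdiff hps hp hle hv
    have hpj : ∀ j, p j = ps j * g (∑ r, lam r * m r j) := fun j => by
      change p j = ps j * g ((lam ᵥ* of m) j)
      rw [hlam, hDivergenceGrad, hg _ (div_pos (hp j) (hps j)),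
        mul_div_cancel₀ _ (hps j).ne']
    exact ⟨lam, hpj, fun r => by simpa only [← hpj] using hfeas r⟩
  · rintro ⟨lam, hpj, hmom⟩
    have hfeas : ∀ r, ∑ j, m r j * p j = M r := by simpa only [← hpj] using hmom
    have hgrad : hDivergenceGrad h ps p = lam ᵥ* of m := funext fun j => by
      rw [hDivergenceGrad, hpj j, mul_div_cancel_left₀ _ (hps j).ne', (hg' _).1]
      rfl
    refine ⟨hfeas, fun x hx hxfeas hxp =>
      hDivergence_lt_of_hDivergenceGrad_dotProduct_sub_eq_zero hconv hdiff hps hp hx ?_ hxp⟩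
    have hmx : of m *ᵥ x = of m *ᵥ p := funext fun r => (hxfeas r).trans (hfeas r).symm
    rw [hgrad, ← dotProduct_mulVec, mulVec_sub, hmx, sub_self, dotProduct_zero]

/-- With `g = (h')⁻¹` (inverse of the strictly increasing
derivative of a strictly convex `h`), a positive distribution `P` is the unique
conditional minimizer of `H_h(P‖P*)` under the moment constraints iff
`p_j = p*_j g(∑_r λ_r m_{rj})` for multipliers `λ_r` satisfying the moment
equations. -/
theorem maxent_solution_parametrization
    (n k : ℕ) (hkn : k + 1 < n)
    (h g : ℝ → ℝ)
    (hconv : StrictConvexOn ℝ (Set.Ioi 0) h)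
    (hdiff : ∀ x ∈ Set.Ioi (0 : ℝ), DifferentiableAt ℝ h x)
    (hg : ∀ x ∈ Set.Ioi (0 : ℝ), g (deriv h x) = x)
    (hg' : ∀ y, deriv h (g y) = y ∧ g y ∈ Set.Ioi (0 : ℝ))
    (ps : Fin n → ℝ) (hps : ∀ i, 0 < ps i) (hps1 : ∑ i, ps i = 1)
    (m : Fin (k + 1) → Fin n → ℝ) (M : Fin (k + 1) → ℝ)
    (hm0 : ∀ j, m 0 j = 1) (hM0 : M 0 = 1)
    (hrank : LinearIndependent ℝ m)
    (p : Fin n → ℝ) (hp : ∀ i, 0 < p i) :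
    ((∀ r, ∑ j, m r j * p j = M r) ∧
      ∀ x : Fin n → ℝ, (∀ i, 0 < x i) → (∀ r, ∑ j, m r j * x j = M r) → x ≠ p →
        ∑ i, ps i * h (p i / ps i) < ∑ i, ps i * h (x i / ps i))
    ↔ ∃ lam : Fin (k + 1) → ℝ,
        (∀ j, p j = ps j * g (∑ r, lam r * m r j)) ∧
        ∀ r, ∑ j, m r j * (ps j * g (∑ r', lam r' * m r' j)) = M r :=
  maxent_solution_parametrization_general n k h g hconv hdiff hg hg' ps hps m M p hp
end

section
/- (First decomposition theorem) Every vector of rate constants (q_{ij}) of a Markov chain with positive equilibrium P* is a finite conic (nonnegative linear) combination of rate-constant vectors of simple directed cycles A_{i_1} → A_{i_2} → ⋯ → A_{i_k} → A_{i_1} with rates q_{i_{j+1} i_j} = κ/p*_{i_j} (κ > 0), each of which has the same equilibrium P*. -/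
/-!
Put `F i j = q i j * p*_j`, the equilibrium flux along `A_j → A_i`. The balance condition says
that `F` is a circulation: inflow equals outflow at every state. A state with positive inflow
therefore has positive outflow, so following edges of positive flux inside a finite set closes a
simple cycle. Subtracting the constant flux `κ = min` of `F` along that cycle leaves a circulation
whose support has lost at least one edge; by induction `F` is a sum of constant-flux simple
cycles, and dividing the flux `κ` on the edge `A_j → A_i` by `p*_j` gives the rate `κ / p*_j`.
-/

/-- Rate matrix of a simple directed cycle `A_{c 0} → A_{c 1} → ⋯ → A_{c (k+1)} → A_{c 0}`
(length `k + 2 ≥ 2`, pairwise distinct states) with rates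
`q_{c(l+1), c l} = κ / p*_{c l}`, all other rates zero. Such a chain has
equilibrium `P*`. -/
def IsSimpleCycleChain {n : ℕ} (ps : Fin n → ℝ) (κ : ℝ)
    (Q : Fin n → Fin n → ℝ) : Prop :=
  0 < κ ∧ ∃ (k : ℕ) (c : Fin (k + 2) → Fin n), Function.Injective c ∧
    (∀ l : Fin (k + 2), Q (c (l + 1)) (c l) = κ / ps (c l)) ∧
    (∀ i j : Fin n, (¬ ∃ l : Fin (k + 2), i = c (l + 1) ∧ j = c l) → Q i j = 0)

open Finset Function

theorem Function.periodicPts_nonempty {α : Type*} [Finite α] [Nonempty α] (f : α → α) :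
    (periodicPts f).Nonempty := by
  obtain ⟨a, b, hne, hab⟩ :=
    Finite.exists_ne_map_eq_of_infinite fun n => f^[n] (Classical.arbitrary α)
  wlog hlt : a < b generalizing a b
  · exact this b a hne.symm hab.symm (hne.lt_or_gt.resolve_left hlt)
  refine ⟨f^[a] (Classical.arbitrary α), mk_mem_periodicPts (Nat.sub_pos_of_lt hlt) ?_⟩
  change f^[b - a] (f^[a] _) = _
  rw [← iterate_add_apply, Nat.sub_add_cancel hlt.le]
  exact hab.symm

theorem Function.exists_injective_cycle {α : Type*} [Finite α] [Nonempty α] (f : α → α)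
    (hf : ∀ x, f x ≠ x) :
    ∃ (k : ℕ) (c : Fin (k + 2) → α), Injective c ∧ ∀ l, c (l + 1) = f (c l) := by
  obtain ⟨y, hy⟩ := periodicPts_nonempty f
  obtain ⟨k, hk⟩ : ∃ k, minimalPeriod f y = k + 2 := by
    have hpos := minimalPeriod_pos_of_mem_periodicPts hy
    have hne : minimalPeriod f y ≠ 1 := fun h => hf y (minimalPeriod_eq_one_iff_isFixedPt.1 h)
    exact ⟨minimalPeriod f y - 2, by omega⟩
  refine ⟨k, fun l => f^[l] y, fun l l' h => Fin.ext ?_, fun l => ?_⟩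
  · exact iterate_injOn_Iio_minimalPeriod (by simp [hk]) (by simp [hk]) h
  · have hper : IsPeriodicPt f (k + 2) y := hk ▸ isPeriodicPt_minimalPeriod f y
    simp only [Fin.val_add, Fin.val_one, hper.iterate_mod_apply, iterate_succ_apply']

/-- `F i j` is the flow along the edge `j → i`, matching the index order of the rates `q i j`. -/
structure IsCirculation {α : Type*} [Fintype α] (F : α → α → ℝ) : Prop where
  nonneg : ∀ i j, 0 ≤ F i j
  diag : ∀ i, F i i = 0
  balance : ∀ i, ∑ j, F i j = ∑ j, F j i

open scoped Classical in
noncomputable def cycleFlow {α : Type*} (κ : ℝ) {k : ℕ} (c : Fin (k + 2) → α) (i j : α) : ℝ :=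
  if ∃ l, i = c (l + 1) ∧ j = c l then κ else 0

def IsCycleFlow {α : Type*} (C : α → α → ℝ) : Prop :=
  ∃ κ > 0, ∃ (k : ℕ) (c : Fin (k + 2) → α), Injective c ∧ C = cycleFlow κ c

section cycleFlow

open scoped Classical

variable {α : Type*} {κ : ℝ} {k : ℕ} {c : Fin (k + 2) → α}

theorem cycleFlow_nonneg (hκ : 0 ≤ κ) (i j : α) : 0 ≤ cycleFlow κ c i j := by
  unfold cycleFlow
  split_ifs <;> simp [hκ]

theorem cycleFlow_of_notMem_range {i : α} (hi : i ∉ Set.range c) (j : α) :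
    cycleFlow κ c i j = 0 ∧ cycleFlow κ c j i = 0 := by
  constructor <;> refine if_neg ?_ <;> rintro ⟨l, h₁, h₂⟩
  · exact hi ⟨l + 1, h₁.symm⟩
  · exact hi ⟨l, h₂.symm⟩

theorem cycleFlow_succ_left (hc : Injective c) (l : Fin (k + 2)) (j : α) :
    cycleFlow κ c (c (l + 1)) j = if j = c l then κ else 0 := by
  simp only [cycleFlow, hc.eq_iff, add_left_inj, exists_eq_left']

theorem cycleFlow_right (hc : Injective c) (l : Fin (k + 2)) (i : α) :
    cycleFlow κ c i (c l) = if i = c (l + 1) then κ else 0 := by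
  simp only [cycleFlow, hc.eq_iff, exists_eq_right']

theorem cycleFlow_self (hc : Injective c) (i : α) : cycleFlow κ c i i = 0 := by
  refine if_neg ?_
  rintro ⟨l, h₁, h₂⟩
  have := hc (h₂.symm.trans h₁)
  simp at this

theorem sum_cycleFlow_left_eq_right [Fintype α] (hc : Injective c) (i : α) :
    ∑ j, cycleFlow κ c i j = ∑ j, cycleFlow κ c j i := by
  by_cases hi : i ∈ Set.range c
  · obtain ⟨l, rfl⟩ := hi
    conv_lhs => rw [← sub_add_cancel l 1]
    simp only [cycleFlow_succ_left hc, cycleFlow_right hc, sum_ite_eq', mem_univ, if_true]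
  · simp only [(cycleFlow_of_notMem_range hi _).1, (cycleFlow_of_notMem_range hi _).2]

end cycleFlow

theorem ncard_support_sub_lt {β : Type*} [Finite β] {f g : β → ℝ} (hg : ∀ x, 0 ≤ g x)
    (hfg : ∀ x, 0 ≤ f x - g x) {x₀ : β} (hx₀ : f x₀ ≠ 0) (heq : g x₀ = f x₀) :
    (support (f - g)).ncard < (support f).ncard := by
  have hsub : support (f - g) ⊆ support f := fun x hx hfx => hx <| by
    have := hg x
    have := hfg x
    simp only [Pi.sub_apply]
    linarith
  refine Set.ncard_lt_ncard ((Set.ssubset_iff_of_subset hsub).2 ⟨x₀, hx₀, ?_⟩) (Set.toFinite _)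
  simp [heq]

namespace IsCirculation

variable {α : Type*} [Fintype α] {F : α → α → ℝ}

theorem exists_pos_outflow (hF : IsCirculation F) {i j : α} (hij : 0 < F i j) :
    ∃ j', 0 < F j' i := by
  have hin : 0 < ∑ j, F i j := sum_pos' (fun j _ => hF.nonneg i j) ⟨j, mem_univ j, hij⟩
  rw [hF.balance] at hin
  by_contra! h
  exact hin.not_ge (sum_nonpos fun j' _ => h j')

theorem exists_injective_cycle (hF : IsCirculation F) {i₀ j₀ : α} (h₀ : 0 < F i₀ j₀) :
    ∃ (k : ℕ) (c : Fin (k + 2) → α), Injective c ∧ ∀ l, 0 < F (c (l + 1)) (c l) := by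
  let S := {i // ∃ j, 0 < F i j}
  have hstep : ∀ x : S, ∃ y : S, 0 < F y x := fun ⟨i, j, hij⟩ =>
    let ⟨j', hj'⟩ := hF.exists_pos_outflow hij
    ⟨⟨j', i, hj'⟩, hj'⟩
  choose f hf using hstep
  have : Nonempty S := ⟨⟨i₀, j₀, h₀⟩⟩
  obtain ⟨k, c, hc, hcf⟩ := Function.exists_injective_cycle f fun x hx => by
    simpa [hx, hF.diag] using hf x
  refine ⟨k, Subtype.val ∘ c, Subtype.val_injective.comp hc, fun l => ?_⟩
  simpa [hcf] using hf (c l)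

theorem sub_cycleFlow {κ : ℝ} {k : ℕ} {c : Fin (k + 2) → α} (hF : IsCirculation F)
    (hc : Injective c) (hle : ∀ l, κ ≤ F (c (l + 1)) (c l)) :
    IsCirculation (F - cycleFlow κ c) where
  nonneg i j := by
    by_cases h : ∃ l, i = c (l + 1) ∧ j = c l
    · obtain ⟨l, rfl, rfl⟩ := h
      simpa [cycleFlow_succ_left hc] using hle l
    · simpa [cycleFlow, h] using hF.nonneg i j
  diag i := by simp [hF.diag, cycleFlow_self hc]
  balance i := by
    simp only [Pi.sub_apply, sum_sub_distrib, hF.balance, sum_cycleFlow_left_eq_right hc]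

theorem exists_eq_sum_cycleFlows (hF : IsCirculation F) :
    ∃ (m : ℕ) (C : Fin m → α → α → ℝ), (∀ t, IsCycleFlow (C t)) ∧ F = ∑ t, C t := by
  induction hN : (support (uncurry F)).ncard using Nat.strong_induction_on
    generalizing F with
  | _ N ih =>
  by_cases hzero : F = 0
  · exact ⟨0, finZeroElim, finZeroElim, by simp [hzero]⟩
  obtain ⟨i₀, j₀, h₀⟩ : ∃ i j, 0 < F i j := by
    by_contra! h
    exact hzero (funext₂ fun i j => (h i j).antisymm (hF.nonneg i j))
  obtain ⟨k, c, hc, hpos⟩ := hF.exists_injective_cycle h₀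
  set κ := univ.inf' univ_nonempty fun l => F (c (l + 1)) (c l)
  have hκ : 0 < κ := (lt_inf'_iff _).2 fun l _ => hpos l
  have hle (l) : κ ≤ F (c (l + 1)) (c l) := inf'_le _ (mem_univ l)
  obtain ⟨l₀, -, hl₀⟩ := exists_mem_eq_inf' univ_nonempty fun l => F (c (l + 1)) (c l)
  have hF' := hF.sub_cycleFlow hc hle
  have hlt : (support (uncurry (F - cycleFlow κ c))).ncard < N :=
    hN ▸ ncard_support_sub_lt (f := uncurry F) (g := uncurry (cycleFlow κ c))
      (fun p => cycleFlow_nonneg hκ.le p.1 p.2) (fun p => hF'.nonneg p.1 p.2)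
      (x₀ := (c (l₀ + 1), c l₀)) (hpos l₀).ne' (by simpa [cycleFlow_succ_left hc] using hl₀)
  obtain ⟨m, C, hC, hsum⟩ := ih _ hlt hF' rfl
  refine ⟨m + 1, Fin.cons (cycleFlow κ c) C, Fin.cases ⟨κ, hκ, k, c, hc, rfl⟩ hC, ?_⟩
  rw [Fin.sum_cons, ← hsum, add_sub_cancel]

end IsCirculation

theorem isCirculation_mul_equilibrium {α : Type*} [Fintype α] [DecidableEq α] {ps : α → ℝ}
    (hps : ∀ i, 0 ≤ ps i) {q : α → α → ℝ} (hq : ∀ i j, i ≠ j → 0 ≤ q i j)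
    (hqd : ∀ i, q i i = 0)
    (hbal : ∀ i, ∑ j ∈ univ.erase i, q i j * ps j = (∑ j ∈ univ.erase i, q j i) * ps i) :
    IsCirculation fun i j => q i j * ps j where
  nonneg i j := by
    rcases eq_or_ne i j with rfl | hij
    · simp [hqd]
    · exact mul_nonneg (hq i j hij) (hps j)
  diag i := by simp [hqd]
  balance i := by
    rw [← sum_mul, ← sum_erase univ (a := i) (by simp [hqd]),
      ← sum_erase univ (f := (q · i)) (hqd i)]
    exact hbal i

theorem isSimpleCycleChain_cycleFlow_div {n : ℕ} (ps : Fin n → ℝ) {κ : ℝ} (hκ : 0 < κ) {k : ℕ}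
    {c : Fin (k + 2) → Fin n} (hc : Injective c) :
    IsSimpleCycleChain ps κ fun i j => cycleFlow κ c i j / ps j :=
  ⟨hκ, k, c, hc, fun l => by simp [cycleFlow_succ_left hc], fun i j h => by simp [cycleFlow, h]⟩

/-- **first decomposition theorem.** Every Markov chain with
positive equilibrium `P*` is a finite conic combination of simple directed
cycles with the same equilibrium. -/
theorem first_decomposition_theorem
    (n : ℕ) (ps : Fin n → ℝ) (hps : ∀ i, 0 < ps i)
    (q : Fin n → Fin n → ℝ)
    (hq : ∀ i j, i ≠ j → 0 ≤ q i j) (hqd : ∀ i, q i i = 0)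
    (hbal : ∀ i, ∑ j ∈ Finset.univ.erase i, q i j * ps j
        = (∑ j ∈ Finset.univ.erase i, q j i) * ps i) :
    ∃ (m : ℕ) (Q : Fin m → Fin n → Fin n → ℝ) (a : Fin m → ℝ),
      (∀ t, 0 ≤ a t) ∧ (∀ t, ∃ κ : ℝ, IsSimpleCycleChain ps κ (Q t)) ∧
      q = ∑ t, a t • Q t := by
  obtain ⟨m, C, hC, hsum⟩ :=
    (isCirculation_mul_equilibrium (fun i => (hps i).le) hq hqd hbal).exists_eq_sum_cycleFlows
  choose κ hκ k c hc hCc using hC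
  refine ⟨m, fun t i j => C t i j / ps j, 1, fun _ => zero_le_one, fun t => ⟨κ t, ?_⟩, ?_⟩
  · simp only [hCc t]
    exact isSimpleCycleChain_cycleFlow_div ps (hκ t) (hc t)
  · funext i j
    have hij : q i j * ps j = ∑ t, C t i j := by simpa using congrFun₂ hsum i j
    simp only [Finset.sum_apply, Pi.one_apply, one_smul, ← sum_div, ← hij,
      mul_div_cancel_right₀ _ (hps j).ne']
end

section
/- (Second decomposition theorem) For any Markov chain with positive equilibrium P* and any probability distribution P, the velocity vector dP/dt of the Kolmogorov equation at P is a conic combination of the velocity vectors at P of two-state reversible chains A_i ⇌ A_j with the same equilibrium, i.e., of vectors of the form w(p_j/p*_j − p_i/p*_i)(e_i − e_j) with w ≥ 0. -/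
/-!
Write `a i j = q i j * p*_j` and `f = p / p*`, so that the velocity is
`v i = ∑ j, a i j * (f j - f i)`, linear in `f` and zero on constants, while the balance
condition says that `a` has equal row and column sums. Peeling off the top level set of `f`
writes `f = min f M' + (M - M') • 1_U` with `U = {M ≤ f}`, so by induction on the set of values
`f` is a constant plus a nonnegative combination of indicators of upper level sets. For an
indicator `1_U`, `v` is a supply on `Uᶜ` and a demand on `U` whose totals agree by the balance
condition, and the product coupling transports one onto the other along pairs `i ∉ U`, `j ∈ U`,
where `f i < f j`. Hence `v` is the net outflow of a nonnegative flow `G` along which `f` strictly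
increases, and `w i j = (G i j - G j i) / (f j - f i) ≥ 0` gives the decomposition.
-/

open Finset

theorem sum_sum_smul_sub_eq_sum_sum_lt {ι R M : Type*} [Fintype ι] [LinearOrder ι] [Ring R]
    [AddCommGroup M] [Module R M] (G : ι → ι → R) (e : ι → M) :
    ∑ i, ∑ j, G i j • (e i - e j)
      = ∑ i, ∑ j ∈ univ.filter (· < i), (G i j - G j i) • (e i - e j) := by
  set x := fun i j => G i j • (e i - e j)
  have hx : ∀ i j, x i j = (if j < i then x i j else 0) + if i < j then x i j else 0 := by
    intro i j
    rcases lt_trichotomy i j with h | rfl | h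
    · simp [h, h.not_gt]
    · simp [x]
    · simp [h, h.not_gt]
  have hswap : ∀ i j, (G i j - G j i) • (e i - e j) = x i j + x j i := by
    intro i j
    simp only [x, sub_smul, smul_sub]
    abel
  calc ∑ i, ∑ j, x i j
      = ∑ i, ∑ j, (if j < i then x i j else 0) + ∑ i, ∑ j, (if i < j then x i j else 0) := by
        simp_rw [← sum_add_distrib, ← hx]
    _ = ∑ i, ∑ j, (if j < i then x i j else 0) + ∑ i, ∑ j, (if j < i then x j i else 0) := by
        rw [sum_comm (f := fun i j => if i < j then x i j else 0)]
    _ = _ := by simp_rw [sum_filter, hswap, ite_add_zero .., sum_add_distrib]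

section

variable {ι : Type*} [Fintype ι]

theorem exists_coupling {s d : ι → ℝ} (hs : ∀ i, 0 ≤ s i) (hd : ∀ j, 0 ≤ d j)
    (hsd : ∑ i, s i = ∑ j, d j) :
    ∃ G : ι → ι → ℝ, (∀ i j, 0 ≤ G i j) ∧ (∀ i j, G i j ≠ 0 → s i ≠ 0 ∧ d j ≠ 0) ∧
      (∀ i, ∑ j, G i j = s i) ∧ ∀ j, ∑ i, G i j = d j := by
  refine ⟨fun i j => s i * d j / ∑ k, s k,
    fun i j => div_nonneg (mul_nonneg (hs i) (hd j)) (sum_nonneg fun k _ => hs k),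
    fun i j h => mul_ne_zero_iff.1 (div_ne_zero_iff.1 h).1, fun i => ?_, fun j => ?_⟩
  · rcases eq_or_ne (∑ k, s k) 0 with h0 | h0
    · simp [h0, (sum_eq_zero_iff_of_nonneg fun k _ => hs k).1 h0 i (mem_univ i)]
    · simp_rw [mul_div_assoc, ← mul_sum, ← sum_div, ← hsd, div_self h0, mul_one]
  · rcases eq_or_ne (∑ k, s k) 0 with h0 | h0
    · rw [hsd] at h0
      simp [(sum_eq_zero_iff_of_nonneg fun k _ => hd k).1 h0 j (mem_univ j)]
    · simp_rw [mul_comm (s _), mul_div_assoc, ← mul_sum, ← sum_div, div_self h0, mul_one]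

theorem sum_sum_smul_single_sub_single_apply [DecidableEq ι] (G : ι → ι → ℝ) (l : ι) :
    (∑ i, ∑ j, G i j • (Pi.single i (1 : ℝ) - Pi.single j 1) : ι → ℝ) l
      = ∑ j, G l j - ∑ j, G j l := by
  simp [Finset.sum_apply, Pi.single_apply, mul_sub, sum_sub_distrib]

/-- With `a i j = q i j * p*_j` and `f = p / p*` this is the right-hand side of the
Kolmogorov equation. -/
def kolmogorovVelocity (a : ι → ι → ℝ) (f : ι → ℝ) (i : ι) : ℝ :=
  ∑ j, a i j * (f j - f i)

def IsUphillDivergence (f v : ι → ℝ) : Prop :=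
  ∃ G : ι → ι → ℝ, (∀ i j, 0 ≤ G i j) ∧ (∀ i j, G i j ≠ 0 → f i < f j) ∧
    ∀ i, v i = ∑ j, G i j - ∑ j, G j i

namespace IsUphillDivergence

variable {f g v v' : ι → ℝ}

theorem zero : IsUphillDivergence f 0 :=
  ⟨0, fun _ _ => le_rfl, fun _ _ h => absurd rfl h, fun _ => by simp⟩

theorem add (hv : IsUphillDivergence f v) (hv' : IsUphillDivergence f v') :
    IsUphillDivergence f (v + v') := by
  obtain ⟨G, hG, hGf, hGv⟩ := hv
  obtain ⟨G', hG', hGf', hGv'⟩ := hv'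
  refine ⟨fun i j => G i j + G' i j, fun i j => add_nonneg (hG i j) (hG' i j),
    fun i j (h : G i j + G' i j ≠ 0) => ?_, fun i => ?_⟩
  · by_contra hij
    exact h (by rw [not_imp_comm.1 (hGf i j) hij, not_imp_comm.1 (hGf' i j) hij, add_zero])
  · simp only [Pi.add_apply, hGv, hGv', sum_add_distrib]
    ring

theorem smul {c : ℝ} (hc : 0 ≤ c) (hv : IsUphillDivergence f v) :
    IsUphillDivergence f (c • v) := by
  obtain ⟨G, hG, hGf, hGv⟩ := hv
  refine ⟨c • G, fun i j => mul_nonneg hc (hG i j), fun i j h => hGf i j (right_ne_zero_of_mul h),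
    fun i => ?_⟩
  simp only [Pi.smul_apply, hGv, smul_eq_mul, ← mul_sum, mul_sub]

theorem of_lt_imp_lt (hfg : ∀ i j, g i < g j → f i < f j) (hv : IsUphillDivergence g v) :
    IsUphillDivergence f v := by
  obtain ⟨G, hG, hGg, hGv⟩ := hv
  exact ⟨G, hG, fun i j h => hfg i j (hGg i j h), hGv⟩

theorem exists_eq_sum_lt [LinearOrder ι] (hv : IsUphillDivergence f v) :
    ∃ w : ι → ι → ℝ, (∀ i j, 0 ≤ w i j) ∧
      v = ∑ i, ∑ j ∈ univ.filter (· < i),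
        (w i j * (f j - f i)) • (Pi.single i (1 : ℝ) - Pi.single j 1) := by
  obtain ⟨G, hG, hGf, hGv⟩ := hv
  have hG0 : ∀ i j, ¬ f i < f j → G i j = 0 := fun i j => not_imp_comm.1 (hGf i j)
  refine ⟨fun i j => (G i j - G j i) / (f j - f i), fun i j => ?_, ?_⟩
  · dsimp only
    rcases lt_trichotomy (f i) (f j) with h | h | h
    · rw [hG0 j i h.not_gt, sub_zero]
      exact div_nonneg (hG i j) (sub_nonneg.2 h.le)
    · simp [h]
    · rw [hG0 i j h.not_gt, zero_sub]
      exact div_nonneg_of_nonpos (neg_nonpos.2 (hG j i)) (sub_nonpos.2 h.le)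
  · -- on ties both `G i j` and `G j i` vanish, so the junk value `0 / 0 = 0` is harmless
    have hw : ∀ i j, (G i j - G j i) / (f j - f i) * (f j - f i) = G i j - G j i := by
      intro i j
      rcases eq_or_ne (f j) (f i) with h | h
      · simp [hG0 i j (by simp [h]), hG0 j i (by simp [h])]
      · exact div_mul_cancel₀ _ (sub_ne_zero.2 h)
    simp_rw [hw, ← sum_sum_smul_sub_eq_sum_sum_lt]
    ext l
    rw [hGv, sum_sum_smul_single_sub_single_apply]

end IsUphillDivergence

variable {a : ι → ι → ℝ}

theorem kolmogorovVelocity_add_smul (f g : ι → ℝ) (c : ℝ) :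
    kolmogorovVelocity a (f + c • g) = kolmogorovVelocity a f + c • kolmogorovVelocity a g := by
  ext i
  simp only [kolmogorovVelocity, Pi.add_apply, Pi.smul_apply, smul_eq_mul, mul_sum,
    ← sum_add_distrib]
  exact sum_congr rfl fun j _ => by ring

variable [DecidableEq ι]

theorem sum_compl_sum_eq_sum_sum_compl (hbal : ∀ i, ∑ j, a i j = ∑ j, a j i) (U : Finset ι) :
    ∑ i ∈ Uᶜ, ∑ j ∈ U, a i j = ∑ i ∈ U, ∑ j ∈ Uᶜ, a i j := by
  have h := sum_congr rfl fun i (_ : i ∈ U) => hbal i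
  simp only [← sum_add_sum_compl U] at h
  rw [sum_add_distrib, sum_add_distrib, sum_comm (s := U) (t := U)] at h
  rw [sum_comm]
  linarith

theorem kolmogorovVelocity_indicator (U : Finset ι) (i : ι) :
    kolmogorovVelocity a (fun k => if k ∈ U then 1 else 0) i
      = (if i ∈ Uᶜ then ∑ j ∈ U, a i j else 0) - if i ∈ U then ∑ j ∈ Uᶜ, a i j else 0 := by
  rw [kolmogorovVelocity, ← sum_add_sum_compl U]
  by_cases hi : i ∈ U <;>
    simp [hi, mul_sub, mul_ite, sum_sub_distrib, sum_ite_mem, inter_self,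
      disjoint_iff_inter_eq_empty.1 (disjoint_compl_left (a := U))]

theorem isUphillDivergence_kolmogorovVelocity_indicator (ha : ∀ i j, i ≠ j → 0 ≤ a i j)
    (hbal : ∀ i, ∑ j, a i j = ∑ j, a j i) {f : ι → ℝ} (U : Finset ι)
    (hU : ∀ i j, i ∉ U → j ∈ U → f i < f j) :
    IsUphillDivergence f (kolmogorovVelocity a fun k => if k ∈ U then 1 else 0) := by
  have hout : ∀ i ∈ Uᶜ, 0 ≤ ∑ j ∈ U, a i j := fun i hi => sum_nonneg fun j hj =>
    ha i j (ne_of_mem_of_not_mem hj (mem_compl.1 hi)).symm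
  have hin : ∀ i ∈ U, 0 ≤ ∑ j ∈ Uᶜ, a i j := fun i hi => sum_nonneg fun j hj =>
    ha i j (ne_of_mem_of_not_mem hi (mem_compl.1 hj))
  obtain ⟨G, hG, hGsupp, hGout, hGin⟩ := exists_coupling
    (s := fun i => if i ∈ Uᶜ then ∑ j ∈ U, a i j else 0)
    (d := fun i => if i ∈ U then ∑ j ∈ Uᶜ, a i j else 0)
    (fun i => by split_ifs with hi; exacts [hout i hi, le_rfl])
    (fun i => by split_ifs with hi; exacts [hin i hi, le_rfl])
    (by simp only [sum_ite_mem, univ_inter, sum_compl_sum_eq_sum_sum_compl hbal])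
  refine ⟨G, hG, fun i j h => ?_, fun i => by rw [kolmogorovVelocity_indicator, hGout, hGin]⟩
  obtain ⟨hi, hj⟩ := hGsupp i j h
  exact hU i j (mem_compl.1 (ite_ne_right_iff.1 hi).1) (ite_ne_right_iff.1 hj).1

theorem eq_min_add_smul_indicator {f : ι → ℝ} {M M' : ℝ} (hM' : M' < M)
    (hf : ∀ k, f k = M ∨ f k ≤ M') :
    f = (fun k => min (f k) M')
      + (M - M') • fun k => if k ∈ univ.filter (M ≤ f ·) then 1 else 0 := by
  ext k
  rcases hf k with hk | hk
  · simp [hk, hM'.le]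
  · simp [hk, (hk.trans_lt hM').not_ge]

theorem isUphillDivergence_kolmogorovVelocity_of_forall_mem (ha : ∀ i j, i ≠ j → 0 ≤ a i j)
    (hbal : ∀ i, ∑ j, a i j = ∑ j, a j i) (T : Finset ℝ) :
    ∀ f : ι → ℝ, (∀ i, f i ∈ T) → IsUphillDivergence f (kolmogorovVelocity a f) := by
  induction T using Finset.induction_on_max with
  | empty =>
    intro f hf
    rw [show kolmogorovVelocity a f = 0 from funext fun i => absurd (hf i) (notMem_empty _)]
    exact .zero
  | insert M T hT ih =>
    intro f hf
    rcases T.eq_empty_or_nonempty with rfl | hne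
    · have hfM : ∀ i, f i = M := fun i => mem_singleton.1 (hf i)
      rw [show kolmogorovVelocity a f = 0 from funext fun i => by simp [kolmogorovVelocity, hfM]]
      exact .zero
    set M' := T.max' hne
    have hM' : M' < M := hT _ (max'_mem T hne)
    have hfM' : ∀ k, f k = M ∨ f k ≤ M' := fun k => (mem_insert.1 (hf k)).imp_right (le_max' T _)
    set U := univ.filter fun k => M ≤ f k
    set g := fun k => min (f k) M'
    have hg : ∀ k, g k ∈ T := fun k => by
      rcases hfM' k with hk | hk
      · simpa [g, hk, hM'.le] using max'_mem T hne
      · simpa [g, hk] using (mem_insert.1 (hf k)).resolve_left (hk.trans_lt hM').ne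
    have hgf : ∀ i j, g i < g j → f i < f j := fun i j h =>
      lt_of_not_ge fun h' => h.not_ge (min_le_min_right _ h')
    have hU : ∀ i j, i ∉ U → j ∈ U → f i < f j := fun i j hi hj => by
      simp only [U, mem_filter, mem_univ, true_and, not_le] at hi hj
      linarith
    have hv : kolmogorovVelocity a f = kolmogorovVelocity a g
        + (M - M') • kolmogorovVelocity a fun k => if k ∈ U then 1 else 0 := by
      rw [← kolmogorovVelocity_add_smul, ← eq_min_add_smul_indicator hM' hfM']
    rw [hv]
    exact ((ih g hg).of_lt_imp_lt hgf).add
      ((isUphillDivergence_kolmogorovVelocity_indicator ha hbal U hU).smul (sub_nonneg.2 hM'.le))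

theorem isUphillDivergence_kolmogorovVelocity (ha : ∀ i j, i ≠ j → 0 ≤ a i j)
    (hbal : ∀ i, ∑ j, a i j = ∑ j, a j i) (f : ι → ℝ) :
    IsUphillDivergence f (kolmogorovVelocity a f) :=
  isUphillDivergence_kolmogorovVelocity_of_forall_mem ha hbal (univ.image f) f
    fun i => mem_image_of_mem f (mem_univ i)

end

theorem second_decomposition_theorem_general
    (n : ℕ) (ps : Fin n → ℝ) (hps : ∀ i, 0 < ps i)
    (q : Fin n → Fin n → ℝ)
    (hq : ∀ i j, i ≠ j → 0 ≤ q i j)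
    (hbal : ∀ i, ∑ j ∈ Finset.univ.erase i, q i j * ps j
        = (∑ j ∈ Finset.univ.erase i, q j i) * ps i)
    (p : Fin n → ℝ) :
    ∃ w : Fin n → Fin n → ℝ, (∀ i j, 0 ≤ w i j) ∧
      (fun i => ∑ j ∈ Finset.univ.erase i,
          q i j * ps j * (p j / ps j - p i / ps i))
        = ∑ i, ∑ j ∈ Finset.univ.filter (fun j => j < i),
            (w i j * (p j / ps j - p i / ps i)) •
              (Pi.single i (1 : ℝ) - Pi.single j 1) := by
  set a := fun i j => q i j * ps j
  have ha : ∀ i j, i ≠ j → 0 ≤ a i j := fun i j hij => mul_nonneg (hq i j hij) (hps j).le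
  have hbal' : ∀ i, ∑ j, a i j = ∑ j, a j i := fun i => by
    rw [← add_sum_erase _ _ (mem_univ i), ← add_sum_erase _ _ (mem_univ i), hbal i, sum_mul]
  obtain ⟨w, hw, hv⟩ :=
    (isUphillDivergence_kolmogorovVelocity ha hbal' fun i => p i / ps i).exists_eq_sum_lt
  refine ⟨w, hw, ?_⟩
  rw [← hv]
  ext i
  exact sum_erase _ (by simp)

/-- **second decomposition theorem.** For any Markov chain with
positive equilibrium `P*` and any probability distribution `P`, the velocity
vector of the Kolmogorov equation at `P` is a conic combination of the velocity
vectors of two-state reversible chains `A_i ⇌ A_j` with the same equilibrium,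
i.e. of vectors `w (p_j/p*_j − p_i/p*_i)(e_i − e_j)`, `w ≥ 0`. -/
theorem second_decomposition_theorem
    (n : ℕ) (ps : Fin n → ℝ) (hps : ∀ i, 0 < ps i)
    (q : Fin n → Fin n → ℝ)
    (hq : ∀ i j, i ≠ j → 0 ≤ q i j) (hqd : ∀ i, q i i = 0)
    (hbal : ∀ i, ∑ j ∈ Finset.univ.erase i, q i j * ps j
        = (∑ j ∈ Finset.univ.erase i, q j i) * ps i)
    (p : Fin n → ℝ) (hp : ∀ i, 0 ≤ p i) (hp1 : ∑ i, p i = 1) :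
    ∃ w : Fin n → Fin n → ℝ, (∀ i j, 0 ≤ w i j) ∧
      (fun i => ∑ j ∈ Finset.univ.erase i,
          q i j * ps j * (p j / ps j - p i / ps i))
        = ∑ i, ∑ j ∈ Finset.univ.filter (fun j => j < i),
            (w i j * (p j / ps j - p i / ps i)) •
              (Pi.single i (1 : ℝ) - Pi.single j 1) :=
  second_decomposition_theorem_general n ps hps q hq hbal p
end

section
/- For a simple directed cycle on n states A_1 → A_2 → ⋯ → A_n → A_1 with rates q_{i+1,i} = 1/p*_i, the velocity at a distribution P has coordinates (𝐯_n)_j = p_{j-1}/p*_{j-1} − p_j/p*_j (indices mod n). If p_1/p*_1 = min_j p_j/p*_j and p_1/p*_1 ≠ p_2/p*_2, then 𝐯_n = 𝐯_{n-1} + κ 𝐯_2, where 𝐯_{n-1} is the velocity of the cycle A_2 → ⋯ → A_n → A_2 with rates 1/p*_i, 𝐯_2 is the velocity of A_1 ⇌ A_2 with rates 1/p*_1, 1/p*_2, and κ = (p_n/p*_n − p_1/p*_1)/(p_2/p*_2 − p_1/p*_1) ≥ 0. -/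
/-! Only the two coordinates touched by the chord `A_1 ⇌ A_2` differ between `𝐯_n` and `𝐯_{n-1}`,
and there the choice of `κ` makes `κ (p_2/p*_2 − p_1/p*_1) = p_n/p*_n − p_1/p*_1`; minimality of
`p_1/p*_1` makes both the numerator and the denominator of `κ` nonnegative. -/

theorem Fin.zero_sub_one_eq_last (n : ℕ) : (0 : Fin (n + 1)) - 1 = Fin.last n :=
  (zero_sub 1).trans (Fin.ext Fin.coe_neg_one)

theorem cycle_velocity_decomposition_step_general
    (n : ℕ) (ps P : Fin (n + 3) → ℝ)
    (hmin : ∀ j, P 0 / ps 0 ≤ P j / ps j)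
    (hne : P 0 / ps 0 ≠ P 1 / ps 1) :
    let last : Fin (n + 3) := Fin.last (n + 2)
    let vn : Fin (n + 3) → ℝ := fun j => P (j - 1) / ps (j - 1) - P j / ps j
    let vprev : Fin (n + 3) → ℝ := fun j =>
      if j = 0 then 0
      else if j = 1 then P last / ps last - P 1 / ps 1
      else P (j - 1) / ps (j - 1) - P j / ps j
    let v2 : Fin (n + 3) → ℝ := fun j =>
      if j = 0 then P 1 / ps 1 - P 0 / ps 0
      else if j = 1 then -(P 1 / ps 1 - P 0 / ps 0)
      else 0
    let κ : ℝ := (P last / ps last - P 0 / ps 0) / (P 1 / ps 1 - P 0 / ps 0)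
    (∀ j, vn j = vprev j + κ * v2 j) ∧ 0 ≤ κ := by
  intro last vn vprev v2 κ
  have hgap : 0 < P 1 / ps 1 - P 0 / ps 0 := sub_pos.mpr ((hmin 1).lt_of_ne hne)
  have hκ : κ * (P 1 / ps 1 - P 0 / ps 0) = P last / ps last - P 0 / ps 0 :=
    div_mul_cancel₀ _ hgap.ne'
  refine ⟨fun j => ?_, div_nonneg (sub_nonneg.mpr (hmin last)) hgap.le⟩
  rcases eq_or_ne j 0 with rfl | h0
  · simp only [vn, vprev, v2, if_pos, Fin.zero_sub_one_eq_last, hκ]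
    ring
  rcases eq_or_ne j 1 with rfl | h1
  · simp only [vn, vprev, v2, if_neg h0, if_pos, sub_self, mul_neg, hκ]
    ring
  · simp only [vn, vprev, v2, if_neg h0, if_neg h1, mul_zero, add_zero]

/-- For the simple cycle `A_1 → A_2 → ⋯ → A_n → A_1`
(on `n + 3 ≥ 3` states, state `A_1` is index `0`) with rates `1/p*_i`, the
velocity at `P` has coordinates `(𝐯_n)_j = p_{j−1}/p*_{j−1} − p_j/p*_j`
(indices mod `n`). If `p_1/p*_1` is minimal among the `p_j/p*_j` and
`p_1/p*_1 ≠ p_2/p*_2`, then `𝐯_n = 𝐯_{n−1} + κ 𝐯_2` where `𝐯_{n−1}` is the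
velocity of the shorter cycle `A_2 → ⋯ → A_n → A_2`, `𝐯_2` that of
`A_1 ⇌ A_2`, and `κ = (p_n/p*_n − p_1/p*_1)/(p_2/p*_2 − p_1/p*_1) ≥ 0`. -/
theorem cycle_velocity_decomposition_step
    (n : ℕ) (ps P : Fin (n + 3) → ℝ)
    (hps : ∀ i, 0 < ps i)
    (hmin : ∀ j, P 0 / ps 0 ≤ P j / ps j)
    (hne : P 0 / ps 0 ≠ P 1 / ps 1) :
    let last : Fin (n + 3) := Fin.last (n + 2)
    let vn : Fin (n + 3) → ℝ := fun j => P (j - 1) / ps (j - 1) - P j / ps j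
    let vprev : Fin (n + 3) → ℝ := fun j =>
      if j = 0 then 0
      else if j = 1 then P last / ps last - P 1 / ps 1
      else P (j - 1) / ps (j - 1) - P j / ps j
    let v2 : Fin (n + 3) → ℝ := fun j =>
      if j = 0 then P 1 / ps 1 - P 0 / ps 0
      else if j = 1 then -(P 1 / ps 1 - P 0 / ps 0)
      else 0
    let κ : ℝ := (P last / ps last - P 0 / ps 0) / (P 1 / ps 1 - P 0 / ps 0)
    (∀ j, vn j = vprev j + κ * v2 j) ∧ 0 ≤ κ :=
  cycle_velocity_decomposition_step_general n ps P hmin hne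
end

section
/- The cone of possible velocities at a positive distribution P for all Markov chains with positive equilibrium P* equals Q(P,P*) = cone{ γ^{ji} · sign(p_j/p*_j − p_i/p*_i) : i > j }, where γ^{ji} = e_i − e_j; in particular, this cone is a polyhedral convex cone. -/
/-!
Write a balanced rate matrix through its stationary fluxes `F j i = q i j * p*_j`: they form a
circulation (inflow equals outflow at every state), and the velocity becomes
`v i = ∑ j, F j i * (g j - g i)` with `g = p / p*`, bilinear in `F` and `g`.

When `g` is the indicator of `{t < g₀}`, the velocity sums to zero, is nonpositive where `g = 1`
and nonnegative where `g = 0`; a transport plan from its positive to its negative part writes it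
as a nonnegative combination of vectors `e a - e b` with `g₀ a ≤ t < g₀ b`. Lowering the top
level of `g₀` to the next one splits `g₀` into such an indicator plus a function with fewer
values, so every velocity lies in the cone of the `e a - e b` with `g₀ a < g₀ b`. Conversely a
two-cycle between `a` and `b` (a chain in detailed balance) has velocity proportional to
`e a - e b`. The generators `sign (g j - g i) • (e i - e j)`, `j < i`, span the same cone.
-/

open Finset

section Circulation

variable {ι : Type*} [Fintype ι]

variable (ι) in
def circulationCone : PointedCone ℝ (ι → ι → ℝ) where
  carrier := {F | (∀ a b, 0 ≤ F a b) ∧ ∀ i, ∑ j, F j i = ∑ j, F i j}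
  add_mem' := by
    rintro F G ⟨hF, hFb⟩ ⟨hG, hGb⟩
    refine ⟨fun a b => add_nonneg (hF a b) (hG a b), fun i => ?_⟩
    simp only [Pi.add_apply, sum_add_distrib, hFb, hGb]
  zero_mem' := ⟨fun _ _ => le_rfl, fun _ => by simp⟩
  smul_mem' := by
    rintro ⟨c, hc⟩ F ⟨hF, hFb⟩
    refine ⟨fun a b => mul_nonneg hc (hF a b), fun i => ?_⟩
    simp only [Nonneg.mk_smul, Pi.smul_apply, smul_eq_mul, ← mul_sum, hFb]

def fluxVelocity : (ι → ℝ) →ₗ[ℝ] (ι → ι → ℝ) →ₗ[ℝ] ι → ℝ :=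
  LinearMap.mk₂ ℝ (fun g F i => ∑ j, F j i * (g j - g i))
    (fun g g' F => by ext i; simp only [Pi.add_apply, ← sum_add_distrib]; congr 1; ext j; ring)
    (fun c g F => by ext i; simp only [Pi.smul_apply, smul_eq_mul, mul_sum]; congr 1; ext j; ring)
    (fun g F F' => by ext i; simp only [Pi.add_apply, ← sum_add_distrib]; congr 1; ext j; ring)
    (fun c g F => by ext i; simp only [Pi.smul_apply, smul_eq_mul, mul_sum]; congr 1; ext j; ring)

lemma fluxVelocity_apply (g : ι → ℝ) (F : ι → ι → ℝ) (i : ι) :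
    fluxVelocity g F i = ∑ j, F j i * (g j - g i) := rfl

lemma fluxVelocity_const (c : ℝ) (F : ι → ι → ℝ) : fluxVelocity (fun _ => c) F = 0 := by
  ext i
  simp [fluxVelocity_apply]

lemma sum_fluxVelocity_eq_zero {F : ι → ι → ℝ} (hF : F ∈ circulationCone ι) (g : ι → ℝ) :
    ∑ i, fluxVelocity g F i = 0 := by
  simp only [fluxVelocity_apply, mul_sub, sum_sub_distrib]
  rw [sum_comm (f := fun i j => F j i * g j)]
  simp only [← sum_mul, hF.2, sub_self]

lemma fluxVelocity_nonpos_of_forall_le {F : ι → ι → ℝ} (hF : ∀ a b, 0 ≤ F a b)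
    {g : ι → ℝ} {i : ι} (hi : ∀ j, g j ≤ g i) : fluxVelocity g F i ≤ 0 :=
  sum_nonpos fun j _ => mul_nonpos_of_nonneg_of_nonpos (hF j i) (sub_nonpos.2 (hi j))

lemma fluxVelocity_nonneg_of_forall_ge {F : ι → ι → ℝ} (hF : ∀ a b, 0 ≤ F a b)
    {g : ι → ℝ} {i : ι} (hi : ∀ j, g i ≤ g j) : 0 ≤ fluxVelocity g F i :=
  sum_nonneg fun j _ => mul_nonneg (hF j i) (sub_nonneg.2 (hi j))

end Circulation

section DescentCone

variable {ι : Type*} [DecidableEq ι]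

def descentCone (g : ι → ℝ) : PointedCone ℝ (ι → ℝ) :=
  PointedCone.hull ℝ {v | ∃ a b, g a < g b ∧ v = Pi.single a 1 - Pi.single b 1}

lemma descentCone_mono {g g' : ι → ℝ} (h : ∀ a b, g' a < g' b → g a < g b) :
    descentCone g' ≤ descentCone g :=
  Submodule.span_mono fun _ ⟨a, b, hab, hv⟩ => ⟨a, b, h a b hab, hv⟩

lemma smul_single_sub_single_mem_descentCone {g : ι → ℝ} {a b : ι} {c : ℝ} (hc : 0 ≤ c)
    (h : c ≠ 0 → g a < g b) :
    c • (Pi.single a 1 - Pi.single b 1 : ι → ℝ) ∈ descentCone g := by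
  rcases eq_or_ne c 0 with rfl | hc0
  · simp
  · exact Submodule.smul_mem _ (⟨c, hc⟩ : {c : ℝ // 0 ≤ c})
      (Submodule.subset_span ⟨a, b, h hc0, rfl⟩)

lemma sign_smul_mem_descentCone (g : ι → ℝ) (a b : ι) {c : ℝ} (hc : 0 ≤ c) :
    (c * Real.sign (g b - g a)) • (Pi.single a 1 - Pi.single b 1 : ι → ℝ) ∈ descentCone g := by
  rcases lt_trichotomy (g a) (g b) with hab | hab | hab
  · rw [Real.sign_of_pos (sub_pos.2 hab), mul_one]
    exact smul_single_sub_single_mem_descentCone hc fun _ => hab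
  · simp [hab]
  · rw [Real.sign_of_neg (sub_neg.2 hab), mul_neg_one, neg_smul, ← smul_neg, neg_sub]
    exact smul_single_sub_single_mem_descentCone hc fun _ => hab

variable [Fintype ι]

lemma sum_sum_smul_single_sub_single_apply_s12 (c : ι → ι → ℝ) (i : ι) :
    (∑ a, ∑ b, c a b • (Pi.single a 1 - Pi.single b 1 : ι → ℝ)) i
      = ∑ b, c i b - ∑ a, c a i := by
  simp only [Finset.sum_apply, Pi.smul_apply, Pi.sub_apply, Pi.single_apply, smul_eq_mul,
    mul_sub, mul_ite, mul_one, mul_zero, sum_sub_distrib]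
  rw [sum_comm (f := fun a b => if i = a then c a b else 0)]
  simp

lemma mem_descentCone_of_sum_eq_zero {g u : ι → ℝ} (hu : ∑ i, u i = 0)
    (hg : ∀ a b, 0 < u a → u b < 0 → g a < g b) : u ∈ descentCone g := by
  set C := ∑ i, (u i)⁺
  have hC : ∑ i, (u i)⁻ = C := by
    have := congr_arg (fun v : ι → ℝ => ∑ i, v i) (funext fun i => posPart_sub_negPart (u i))
    simp only [sum_sub_distrib, hu] at this
    linarith
  rcases eq_or_ne C 0 with hC0 | hC0
  · have hpos : ∀ i, (u i)⁺ = 0 := fun i =>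
      (sum_eq_zero_iff_of_nonneg fun i _ => posPart_nonneg (u i)).1 hC0 i (mem_univ i)
    have hneg : ∀ i, (u i)⁻ = 0 := fun i =>
      (sum_eq_zero_iff_of_nonneg fun i _ => negPart_nonneg (u i)).1 (hC.trans hC0) i (mem_univ i)
    have : u = 0 := funext fun i => by rw [← posPart_sub_negPart (u i), hpos, hneg, sub_zero]; rfl
    rw [this]
    exact zero_mem _
  -- ship the surplus `(u a)⁺` to each deficit site `b` in proportion to `(u b)⁻`
  have hdecomp : u = ∑ a, ∑ b, ((u a)⁺ * (u b)⁻ / C) • (Pi.single a 1 - Pi.single b 1 : ι → ℝ) := by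
    ext i
    rw [sum_sum_smul_single_sub_single_apply_s12, ← sum_div, ← sum_div, ← mul_sum, ← sum_mul, hC,
      mul_div_cancel_right₀ _ hC0, mul_div_cancel_left₀ _ hC0, posPart_sub_negPart]
  rw [hdecomp]
  refine sum_mem fun a _ => sum_mem fun b _ =>
    smul_single_sub_single_mem_descentCone (by positivity) fun h => ?_
  obtain ⟨hab, -⟩ := div_ne_zero_iff.1 h
  exact hg a b (posPart_pos_iff.1 ((posPart_nonneg _).lt_of_ne' (left_ne_zero_of_mul hab)))
    (negPart_pos_iff.1 ((negPart_nonneg _).lt_of_ne' (right_ne_zero_of_mul hab)))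

lemma fluxVelocity_indicator_mem_descentCone {F : ι → ι → ℝ} (hF : F ∈ circulationCone ι)
    (g : ι → ℝ) (t : ℝ) :
    fluxVelocity (fun i => if t < g i then 1 else 0) F ∈ descentCone g := by
  refine mem_descentCone_of_sum_eq_zero (sum_fluxVelocity_eq_zero hF _) fun a b ha hb => ?_
  have hat : g a ≤ t := by
    by_contra! hta
    refine ha.not_ge (fluxVelocity_nonpos_of_forall_le hF.1 fun j => ?_)
    simp only [hta, if_true]
    split_ifs <;> norm_num
  have htb : t < g b := by
    by_contra! hbt
    refine hb.not_ge (fluxVelocity_nonneg_of_forall_ge hF.1 fun j => ?_)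
    simp only [hbt.not_gt, if_false]
    split_ifs <;> norm_num
  exact hat.trans_lt htb

lemma fluxVelocity_mem_descentCone {F : ι → ι → ℝ} (hF : F ∈ circulationCone ι) (g : ι → ℝ) :
    fluxVelocity g F ∈ descentCone g := by
  suffices ∀ s : Finset ℝ, ∀ g : ι → ℝ, (∀ i, g i ∈ s) → fluxVelocity g F ∈ descentCone g from
    this _ g fun i => mem_image_of_mem g (mem_univ i)
  intro s
  induction s using Finset.induction_on_max with
  | empty =>
    intro g hg
    rw [show g = fun _ => 0 from funext fun i => (notMem_empty _ (hg i)).elim, fluxVelocity_const]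
    exact zero_mem _
  | insert M s hM ih =>
    intro g hg
    rcases s.eq_empty_or_nonempty with rfl | hs
    · rw [show g = fun _ => M from funext fun i => mem_singleton.1 (hg i), fluxVelocity_const]
      exact zero_mem _
    set t := s.max' hs
    have htM : t < M := hM t (max'_mem s hs)
    have hgt : ∀ i, t < g i ↔ g i = M := fun i => by
      rcases mem_insert.1 (hg i) with hi | hi
      · simp [hi, htM]
      · simp [(show g i ≤ t from le_max' s _ hi).not_gt, (hM _ hi).ne]
    -- lower the top level `M` of `g` to the next level `t`
    have hdecomp : g = (fun i => min (g i) t) + (M - t) • fun i => if t < g i then 1 else 0 := by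
      ext i
      by_cases hi : t < g i
      · simp [(hgt i).1 hi, htM, htM.le]
      · simp [hi, not_lt.1 hi]
    have hlower : fluxVelocity (fun i => min (g i) t) F ∈ descentCone g := by
      refine descentCone_mono (fun a b hab => lt_of_not_ge fun hba =>
        hab.not_ge (min_le_min_right t hba)) (ih _ fun i => ?_)
      by_cases hi : t < g i
      · simpa [hi.le] using max'_mem s hs
      · rw [min_eq_left (not_lt.1 hi)]
        exact (mem_insert.1 (hg i)).resolve_left fun h => hi ((hgt i).2 h)
    have hsplit : fluxVelocity g F = fluxVelocity (fun i => min (g i) t) F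
        + (M - t) • fluxVelocity (fun i => if t < g i then 1 else 0) F := by
      conv_lhs => rw [hdecomp]
      rw [LinearMap.map_add₂, LinearMap.map_smul₂]
    rw [hsplit]
    exact add_mem hlower (Submodule.smul_mem _ (⟨M - t, sub_nonneg.2 htM.le⟩ : {c : ℝ // 0 ≤ c})
      (fluxVelocity_indicator_mem_descentCone hF g t))

lemma exists_mem_circulationCone_fluxVelocity_eq {g : ι → ℝ} {a b : ι} (hab : g a < g b) :
    ∃ F ∈ circulationCone ι, fluxVelocity g F = Pi.single a 1 - Pi.single b 1 := by
  have hne : a ≠ b := fun h => hab.ne (congrArg g h)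
  -- a two-cycle between `a` and `b` carrying `(g b - g a)⁻¹` each way
  set F : ι → ι → ℝ := fun x y => if (x = a ∧ y = b) ∨ (x = b ∧ y = a) then (g b - g a)⁻¹ else 0
  have hF : ∀ x y, F x y = F y x := fun x y => by simp only [F]; congr 1; exact propext (by tauto)
  refine ⟨F, ⟨fun x y => ?_, fun i => sum_congr rfl fun j _ => hF j i⟩, ?_⟩
  · simp only [F]; split_ifs <;> simp [hab.le]
  · ext i
    simp only [fluxVelocity_apply, F, Pi.sub_apply, Pi.single_apply]
    have hgab : g b - g a ≠ 0 := sub_ne_zero.2 hab.ne'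
    have hgba : (g b - g a)⁻¹ * (g a - g b) = -1 := by
      rw [← neg_sub (g b), mul_neg, inv_mul_cancel₀ hgab]
    rcases eq_or_ne i a with rfl | hia
    · simp [hne, hgab]
    rcases eq_or_ne i b with rfl | hib
    · simp [hne.symm, hgba]
    · simp [hia, hib]

theorem map_fluxVelocity_circulationCone (g : ι → ℝ) :
    (circulationCone ι).map (fluxVelocity g) = descentCone g := by
  refine le_antisymm ?_ (Submodule.span_le.2 ?_)
  · rintro _ ⟨F, hF, rfl⟩
    exact fluxVelocity_mem_descentCone hF g
  · rintro _ ⟨a, b, hab, rfl⟩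
    exact PointedCone.mem_map.2 (exists_mem_circulationCone_fluxVelocity_eq hab)

lemma exists_balanced_rates_iff {ps : ι → ℝ} (hps : ∀ i, 0 < ps i) (g v : ι → ℝ) :
    (∃ q : ι → ι → ℝ,
        (∀ i j, i ≠ j → 0 ≤ q i j) ∧ (∀ i, q i i = 0) ∧
        (∀ i, ∑ j ∈ univ.erase i, q i j * ps j = (∑ j ∈ univ.erase i, q j i) * ps i) ∧
        v = fun i => ∑ j ∈ univ.erase i, q i j * ps j * (g j - g i)) ↔
      v ∈ (circulationCone ι).map (fluxVelocity g) := by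
  rw [PointedCone.mem_map]
  constructor
  · rintro ⟨q, hq, hqii, hbal, rfl⟩
    -- `q i j * ps j` is the stationary probability flux from `j` to `i`
    refine ⟨fun j i => q i j * ps j, ⟨fun j i => ?_, fun i => ?_⟩, ?_⟩
    · rcases eq_or_ne i j with rfl | hij
      · simp [hqii]
      · exact mul_nonneg (hq i j hij) (hps j).le
    · calc ∑ j, q i j * ps j = ∑ j ∈ univ.erase i, q i j * ps j :=
            (sum_erase univ (f := fun j => q i j * ps j) (by simp [hqii])).symm
        _ = ∑ j ∈ univ.erase i, q j i * ps i := by rw [hbal, sum_mul]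
        _ = ∑ j, q j i * ps i := sum_erase univ (f := fun j => q j i * ps i) (by simp [hqii])
    · ext i
      exact (sum_erase univ (f := fun j => q i j * ps j * (g j - g i)) (by simp)).symm
  · rintro ⟨F, ⟨hF, hbal⟩, rfl⟩
    refine ⟨fun i j => if i = j then 0 else F j i / ps j, fun i j hij => ?_, fun i => if_pos rfl,
      fun i => ?_, ?_⟩
    · simp only [if_neg hij]
      exact div_nonneg (hF j i) (hps j).le
    · calc ∑ j ∈ univ.erase i, (if i = j then 0 else F j i / ps j) * ps j
          = ∑ j ∈ univ.erase i, F j i := sum_congr rfl fun j hj => by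
            rw [if_neg (ne_of_mem_erase hj).symm, div_mul_cancel₀ _ (hps j).ne']
        _ = ∑ j ∈ univ.erase i, F i j := by
            rw [sum_erase_eq_sub (mem_univ i), sum_erase_eq_sub (mem_univ i), hbal]
        _ = (∑ j ∈ univ.erase i, if j = i then 0 else F i j / ps i) * ps i := by
            rw [sum_mul]
            refine sum_congr rfl fun j hj => ?_
            rw [if_neg (ne_of_mem_erase hj), div_mul_cancel₀ _ (hps i).ne']
    · ext i
      rw [fluxVelocity_apply, ← sum_erase univ (a := i) (by simp)]
      refine sum_congr rfl fun j hj => ?_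
      dsimp only
      rw [if_neg (ne_of_mem_erase hj).symm, div_mul_cancel₀ _ (hps j).ne']

end DescentCone

section SignedPairs

variable {ι : Type*} [Fintype ι] [LinearOrder ι]

noncomputable def signedPairSum (g : ι → ℝ) : (ι → ι → ℝ) →ₗ[ℝ] ι → ℝ where
  toFun w := ∑ i, ∑ j ∈ univ.filter (· < i),
    (w i j * Real.sign (g j - g i)) • (Pi.single i 1 - Pi.single j 1 : ι → ℝ)
  map_add' w w' := by simp only [Pi.add_apply, add_mul, add_smul, sum_add_distrib]
  map_smul' c w := by simp only [Pi.smul_apply, smul_eq_mul, mul_assoc, mul_smul, smul_sum,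
    RingHom.id_apply]

lemma signedPairSum_single {g : ι → ℝ} {a b : ι} (hba : b < a) (c : ℝ) :
    signedPairSum g (fun i j => if i = a ∧ j = b then c else 0)
      = (c * Real.sign (g b - g a)) • (Pi.single a 1 - Pi.single b 1 : ι → ℝ) := by
  simp [signedPairSum, ite_and, hba]

theorem map_signedPairSum_positive (g : ι → ℝ) :
    (PointedCone.positive ℝ (ι → ι → ℝ)).map (signedPairSum g) = descentCone g := by
  refine le_antisymm ?_ (Submodule.span_le.2 ?_)
  · rintro _ ⟨w, hw, rfl⟩
    exact sum_mem fun i _ => sum_mem fun j _ => sign_smul_mem_descentCone g i j (hw i j)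
  · rintro _ ⟨a, b, hab, rfl⟩
    rw [SetLike.mem_coe, PointedCone.mem_map]
    rcases lt_or_gt_of_ne (fun h : a = b => hab.ne (congrArg g h)) with hlt | hgt
    · refine ⟨fun i j => if i = b ∧ j = a then 1 else 0, fun i j => by positivity, ?_⟩
      rw [signedPairSum_single hlt, Real.sign_of_neg (sub_neg.2 hab)]
      simp
    · refine ⟨fun i j => if i = a ∧ j = b then 1 else 0, fun i j => by positivity, ?_⟩
      rw [signedPairSum_single hgt, Real.sign_of_pos (sub_pos.2 hab)]
      simp

lemma exists_nonneg_signed_pair_sum_iff (g v : ι → ℝ) :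
    (∃ w : ι → ι → ℝ, (∀ i j, 0 ≤ w i j) ∧
        v = ∑ i, ∑ j ∈ univ.filter (fun j => j < i),
          (w i j * Real.sign (g j - g i)) •
            (fun l => (if l = i then (1 : ℝ) else 0) - if l = j then 1 else 0)) ↔
      v ∈ descentCone g := by
  have hsingle : ∀ i j : ι, (fun l => (if l = i then (1 : ℝ) else 0) - if l = j then 1 else 0)
      = Pi.single i 1 - Pi.single j 1 := fun i j => by ext l; simp [Pi.single_apply]
  simp only [hsingle, ← map_signedPairSum_positive, PointedCone.mem_map, eq_comm (a := v)]
  rfl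

end SignedPairs

theorem velocity_cone_description_general
    (n : ℕ) (ps p : Fin n → ℝ)
    (hps : ∀ i, 0 < ps i) :
    let V : Set (Fin n → ℝ) :=
      {v | ∃ q : Fin n → Fin n → ℝ,
        (∀ i j, i ≠ j → 0 ≤ q i j) ∧ (∀ i, q i i = 0) ∧
        (∀ i, ∑ j ∈ Finset.univ.erase i, q i j * ps j
          = (∑ j ∈ Finset.univ.erase i, q j i) * ps i) ∧
        v = fun i => ∑ j ∈ Finset.univ.erase i,
          q i j * ps j * (p j / ps j - p i / ps i)}
    let Q : Set (Fin n → ℝ) :=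
      {v | ∃ w : Fin n → Fin n → ℝ, (∀ i j, 0 ≤ w i j) ∧
        v = ∑ i, ∑ j ∈ Finset.univ.filter (fun j => j < i),
          (w i j * Real.sign (p j / ps j - p i / ps i)) •
            (fun l => (if l = i then (1 : ℝ) else 0) - if l = j then 1 else 0)}
    V = Q ∧ Convex ℝ V ∧ ∀ c : ℝ, 0 ≤ c → ∀ v ∈ V, c • v ∈ V := by
  intro V Q
  set g : Fin n → ℝ := fun i => p i / ps i
  have hV : V = descentCone g := by
    ext v
    rw [SetLike.mem_coe, ← map_fluxVelocity_circulationCone]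
    exact exists_balanced_rates_iff hps g v
  have hQ : Q = descentCone g := Set.ext fun v => exists_nonneg_signed_pair_sum_iff g v
  refine ⟨hV.trans hQ.symm, hV ▸ (descentCone g).convex, fun c hc v hv => ?_⟩
  rw [hV] at hv ⊢
  exact Submodule.smul_mem _ (⟨c, hc⟩ : {c : ℝ // 0 ≤ c}) hv

/-- The cone of possible velocities at a positive
distribution `P` over all Markov chains with positive equilibrium `P*` equals
`cone{ (e_i − e_j)·sign(p_j/p*_j − p_i/p*_i) : i > j }`; in particular it is a
convex cone (polyhedral, being finitely generated). -/
theorem velocity_cone_description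
    (n : ℕ) (ps p : Fin n → ℝ)
    (hps : ∀ i, 0 < ps i) (hp : ∀ i, 0 < p i) (hp1 : ∑ i, p i = 1) :
    let V : Set (Fin n → ℝ) :=
      {v | ∃ q : Fin n → Fin n → ℝ,
        (∀ i j, i ≠ j → 0 ≤ q i j) ∧ (∀ i, q i i = 0) ∧
        (∀ i, ∑ j ∈ Finset.univ.erase i, q i j * ps j
          = (∑ j ∈ Finset.univ.erase i, q j i) * ps i) ∧
        v = fun i => ∑ j ∈ Finset.univ.erase i,
          q i j * ps j * (p j / ps j - p i / ps i)}
    let Q : Set (Fin n → ℝ) :=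
      {v | ∃ w : Fin n → Fin n → ℝ, (∀ i j, 0 ≤ w i j) ∧
        v = ∑ i, ∑ j ∈ Finset.univ.filter (fun j => j < i),
          (w i j * Real.sign (p j / ps j - p i / ps i)) •
            (fun l => (if l = i then (1 : ℝ) else 0) - if l = j then 1 else 0)}
    V = Q ∧ Convex ℝ V ∧ ∀ c : ℝ, 0 ≤ c → ∀ v ∈ V, c • v ∈ V :=
  velocity_cone_description_general n ps p hps
end

section
/- A positive distribution P⁰ on a linear constraint manifold L (given by ∑_j m_{rj} p_j = M_r) satisfies the local Markov-order minimum condition (P⁰ + Q(P⁰,P*)) ∩ L = {P⁰} if and only if there exists a linear functional ψ(P) = ∑_i ψ_i p_i vanishing on L⁰ = ker m such that (ψ_i − ψ_j)(p⁰_i/p*_i − p⁰_j/p*_j) > 0 whenever p⁰_i/p*_i ≠ p⁰_j/p*_j. -/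
/-!
Write `r = p⁰ / p*`. The cone `Q` is generated by `g_{ij} = sign(r_j − r_i) (e_i − e_j)`, and
`x ↦ ∑ rᵢ xᵢ` is strictly negative on every nonzero generator, so `Q` is pointed. As `p⁰ ∈ L`, the
minimum condition says `Q ∩ L⁰ = {0}`, and the sign condition on `ψ` says exactly that
`x ↦ ∑ ψᵢ xᵢ` is negative on the nonzero generators. Given such a `ψ` vanishing on `L⁰`, it is
nonpositive on `Q` and vanishes only at `0` there. Conversely, if `Q ∩ L⁰ = {0}`, the convex hull
of the nonzero generators lies in `Q ∩ {∑ rᵢ xᵢ < 0}`, hence misses `L⁰`; separating this compact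
convex set from the closed subspace `L⁰` gives `ψ`.
-/

open Finset

theorem setOf_add_mem_inter_fiber_eq_singleton_iff {E F G : Type*} [AddCommGroup E]
    [AddCommGroup F] [FunLike G E F] [AddMonoidHomClass G E F] (A : G) {Q : Set E} (hQ : 0 ∈ Q)
    {p₀ : E} {b : F} (hb : A p₀ = b) :
    {p | ∃ v ∈ Q, p = p₀ + v} ∩ {p | A p = b} = {p₀} ↔ ∀ v ∈ Q, A v = 0 → v = 0 := by
  subst hb
  constructor
  · intro h v hv hAv
    have : p₀ + v ∈ ({p₀} : Set E) := h ▸ ⟨⟨v, hv, rfl⟩, by simp [hAv]⟩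
    simpa using this
  · intro h
    refine Set.eq_singleton_iff_unique_mem.2 ⟨⟨⟨0, hQ, (add_zero p₀).symm⟩, rfl⟩, ?_⟩
    rintro _ ⟨⟨v, hv, rfl⟩, hAv⟩
    rw [h v hv (by simpa using hAv), add_zero]

section FiniteCone

variable {ι E : Type*} [AddCommGroup E] [Module ℝ E]

def finiteCone (s : Finset ι) (g : ι → E) : Set E :=
  {x | ∃ w : ι → ℝ, (∀ a, 0 ≤ w a) ∧ x = ∑ a ∈ s, w a • g a}

variable {s : Finset ι} {g : ι → E}

theorem zero_mem_finiteCone : (0 : E) ∈ finiteCone s g :=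
  ⟨0, fun _ => le_rfl, by simp⟩

theorem mem_finiteCone_of_mem [DecidableEq ι] {a : ι} (ha : a ∈ s) : g a ∈ finiteCone s g :=
  ⟨Pi.single a 1, fun b => by by_cases h : b = a <;> simp [h], by
    rw [sum_eq_single_of_mem a ha fun b _ hb => by simp [hb]]; simp⟩

theorem convex_finiteCone : Convex ℝ (finiteCone s g) := by
  rintro _ ⟨w, hw, rfl⟩ _ ⟨w', hw', rfl⟩ t t' ht ht' -
  refine ⟨t • w + t' • w', fun a => add_nonneg (mul_nonneg ht (hw a)) (mul_nonneg ht' (hw' a)), ?_⟩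
  simp only [smul_sum, smul_smul, ← sum_add_distrib, ← add_smul, Pi.add_apply, Pi.smul_apply,
    smul_eq_mul]

theorem eq_zero_of_mem_finiteCone_of_nonneg (φ : E →ₗ[ℝ] ℝ)
    (hφ : ∀ a ∈ s, g a ≠ 0 → φ (g a) < 0) {x : E} (hx : x ∈ finiteCone s g) (hφx : 0 ≤ φ x) :
    x = 0 := by
  obtain ⟨w, hw, rfl⟩ := hx
  have hterm : ∀ a ∈ s, w a * φ (g a) ≤ 0 := fun a ha => by
    by_cases hga : g a = 0
    · simp [hga]
    · exact mul_nonpos_of_nonneg_of_nonpos (hw a) (hφ a ha hga).le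
  have hsum : ∑ a ∈ s, w a * φ (g a) = 0 := by
    refine le_antisymm (sum_nonpos hterm) ?_
    simpa [map_sum, map_smul] using hφx
  refine sum_eq_zero fun a ha => ?_
  by_cases hga : g a = 0
  · simp [hga]
  · have hwa := (sum_eq_zero_iff_of_nonpos hterm).1 hsum a ha
    simp [(mul_eq_zero.1 hwa).resolve_right (hφ a ha hga).ne]

theorem disjoint_convexHull_of_finiteCone_inter_eq_zero (φ : E →ₗ[ℝ] ℝ)
    (hφ : ∀ a ∈ s, g a ≠ 0 → φ (g a) < 0) {K : Set E}
    (hK : ∀ x ∈ finiteCone s g, x ∈ K → x = 0) :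
    Disjoint (convexHull ℝ (g '' {a | a ∈ s ∧ g a ≠ 0})) K := by
  classical
  have hsub : convexHull ℝ (g '' {a | a ∈ s ∧ g a ≠ 0}) ⊆ finiteCone s g ∩ {x | φ x < 0} := by
    refine convexHull_min ?_ (convex_finiteCone.inter (convex_halfSpace_lt φ.isLinear 0))
    rintro _ ⟨a, ⟨ha, hga⟩, rfl⟩
    exact ⟨mem_finiteCone_of_mem ha, hφ a ha hga⟩
  refine Set.disjoint_left.2 fun x hx hxK => ?_
  obtain ⟨hxQ, hφx⟩ := hsub hx
  simp [hK x hxQ hxK] at hφx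

end FiniteCone

theorem exists_strongDual_eq_zero_on_submodule_neg_on_finite
    {E : Type*} [TopologicalSpace E] [AddCommGroup E] [IsTopologicalAddGroup E] [Module ℝ E]
    [ContinuousSMul ℝ E] [LocallyConvexSpace ℝ E] {S : Set E} (hS : S.Finite)
    {K : Submodule ℝ E} (hK : IsClosed (K : Set E)) (hdisj : Disjoint (convexHull ℝ S) K) :
    ∃ f : StrongDual ℝ E, (∀ x ∈ K, f x = 0) ∧ ∀ x ∈ S, f x < 0 := by
  obtain ⟨f, u, v, hfS, huv, hfK⟩ := geometric_hahn_banach_compact_closed (convex_convexHull ℝ S)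
    (hS.isCompact_convexHull (𝕜 := ℝ)) K.convex hK hdisj
  have hv : v < 0 := by simpa using hfK 0 K.zero_mem
  -- a functional bounded below on a subspace vanishes on it
  have hf0 : ∀ x ∈ K, f x = 0 := by
    intro x hx
    by_contra hfx
    have := hfK (((v - 1) / f x) • x) (K.smul_mem _ hx)
    rw [map_smul, smul_eq_mul, div_mul_cancel₀ _ hfx] at this
    linarith
  exact ⟨f, hf0, fun x hx => (hfS x (subset_convexHull ℝ S hx)).trans (huv.trans hv)⟩

theorem sign_sub_mul_neg_iff {a b c : ℝ} : Real.sign (b - a) * c < 0 ↔ 0 < c * (a - b) := by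
  rcases lt_trichotomy a b with h | rfl | h
  · rw [Real.sign_of_pos (sub_pos.2 h), one_mul]
    constructor <;> intro hc <;> nlinarith
  · simp
  · rw [Real.sign_of_neg (sub_neg.2 h)]
    constructor <;> intro hc <;> nlinarith

section MarkovDirection

variable {ι : Type*} [Fintype ι]

/-- The generator `(e_i − e_j) · sign(r_j − r_i)` of the cone `Q(P⁰, P*)`, where `r = p⁰ / p*`. -/
noncomputable def markovDirection [DecidableEq ι] (r : ι → ℝ) (a : ι × ι) : ι → ℝ :=
  Real.sign (r a.2 - r a.1) • (Pi.single a.1 1 - Pi.single a.2 1)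

theorem dotProduct_markovDirection [DecidableEq ι] (r c : ι → ℝ) (i j : ι) :
    c ⬝ᵥ markovDirection r (i, j) = Real.sign (r j - r i) * (c i - c j) := by
  simp [markovDirection, dotProduct_sub]

theorem dotProduct_markovDirection_neg_iff [DecidableEq ι] {r c : ι → ℝ} {i j : ι} :
    c ⬝ᵥ markovDirection r (i, j) < 0 ↔ 0 < (c i - c j) * (r i - r j) := by
  rw [dotProduct_markovDirection, sign_sub_mul_neg_iff]

theorem markovDirection_ne_zero_iff [DecidableEq ι] {r : ι → ℝ} {i j : ι} :
    markovDirection r (i, j) ≠ 0 ↔ r i ≠ r j := by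
  refine ⟨fun h hr => h (by rw [markovDirection, hr, sub_self, Real.sign_zero, zero_smul]),
    fun hr h => ?_⟩
  have := (dotProduct_markovDirection_neg_iff (c := r) (i := i) (j := j)).2
    (mul_self_pos.2 (sub_ne_zero.2 hr))
  simp [h] at this

variable [LinearOrder ι]

theorem forall_pos_iff_forall_dotProduct_markovDirection_neg {r c : ι → ℝ} :
    (∀ i j, r i ≠ r j → 0 < (c i - c j) * (r i - r j)) ↔
      ∀ a ∈ univ.filter (fun a : ι × ι => a.2 < a.1),
        markovDirection r a ≠ 0 → c ⬝ᵥ markovDirection r a < 0 := by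
  refine ⟨fun h ⟨i, j⟩ _ hne => dotProduct_markovDirection_neg_iff.2
    (h i j (markovDirection_ne_zero_iff.1 hne)), fun h => ?_⟩
  have key : ∀ i j, j < i → r i ≠ r j → 0 < (c i - c j) * (r i - r j) := fun i j hji hr =>
    dotProduct_markovDirection_neg_iff.1 (h (i, j) (by simpa using hji)
      (markovDirection_ne_zero_iff.2 hr))
  intro i j hr
  rcases lt_trichotomy i j with hij | rfl | hij
  · linarith [key j i hij hr.symm]
  · exact absurd rfl hr
  · exact key i j hij hr

theorem setOf_sum_filter_lt_eq_finiteCone (r : ι → ℝ) :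
    {v | ∃ w : ι → ι → ℝ, (∀ i j, 0 ≤ w i j) ∧
        v = ∑ i, ∑ j ∈ univ.filter (fun j => j < i),
          (w i j * Real.sign (r j - r i)) •
            (fun l => (if l = i then (1 : ℝ) else 0) - if l = j then 1 else 0)} =
      finiteCone (univ.filter fun a : ι × ι => a.2 < a.1) (markovDirection r) := by
  have hsum : ∀ w : ι → ι → ℝ, ∑ i, ∑ j ∈ univ.filter (fun j => j < i),
      (w i j * Real.sign (r j - r i)) •
        (fun l => (if l = i then (1 : ℝ) else 0) - if l = j then 1 else 0) =
      ∑ a ∈ univ.filter (fun a : ι × ι => a.2 < a.1), w a.1 a.2 • markovDirection r a := by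
    intro w
    rw [← sum_finset_product' (univ.filter fun a : ι × ι => a.2 < a.1) univ
      (fun i => univ.filter (fun j => j < i)) (by simp)]
    refine sum_congr rfl fun ⟨i, j⟩ _ => ?_
    rw [mul_smul, markovDirection]
    congr 2
    ext l
    simp [Pi.single_apply]
  ext v
  constructor
  · rintro ⟨w, hw, rfl⟩
    exact ⟨Function.uncurry w, fun a => hw a.1 a.2, hsum w⟩
  · rintro ⟨w, hw, rfl⟩
    exact ⟨Function.curry w, fun i j => hw (i, j), (hsum (Function.curry w)).symm⟩

end MarkovDirection

theorem local_markov_minimum_iff_separating_functional_general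
    (n k : ℕ) (ps : Fin n → ℝ)
    (m : Fin (k + 1) → Fin n → ℝ) (M : Fin (k + 1) → ℝ)
    (p0 : Fin n → ℝ)
    (hp0L : ∀ r, ∑ j, m r j * p0 j = M r) :
    let Q : Set (Fin n → ℝ) :=
      {v | ∃ w : Fin n → Fin n → ℝ, (∀ i j, 0 ≤ w i j) ∧
        v = ∑ i, ∑ j ∈ Finset.univ.filter (fun j => j < i),
          (w i j * Real.sign (p0 j / ps j - p0 i / ps i)) •
            (fun l => (if l = i then (1 : ℝ) else 0) - if l = j then 1 else 0)}
    let L : Set (Fin n → ℝ) := {p | ∀ r, ∑ j, m r j * p j = M r}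
    ({p | ∃ v ∈ Q, p = p0 + v} ∩ L = {p0}) ↔
      ∃ ψ : Fin n → ℝ,
        (∀ x : Fin n → ℝ, (∀ r, ∑ j, m r j * x j = 0) → ∑ i, ψ i * x i = 0) ∧
        (∀ i j, p0 i / ps i ≠ p0 j / ps j →
          0 < (ψ i - ψ j) * (p0 i / ps i - p0 j / ps j)) := by
  intro Q L
  set r : Fin n → ℝ := fun i => p0 i / ps i
  set S := univ.filter fun a : Fin n × Fin n => a.2 < a.1
  have hQ : Q = finiteCone S (markovDirection r) := setOf_sum_filter_lt_eq_finiteCone r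
  set A := Matrix.mulVecLin (Matrix.of m)
  have hA : ∀ x, A x = fun r => ∑ j, m r j * x j := fun x => rfl
  have hL : L = {p | A p = M} := by
    ext p
    simp [L, hA, funext_iff]
  rw [hQ, hL, setOf_add_mem_inter_fiber_eq_singleton_iff A zero_mem_finiteCone (funext hp0L)]
  constructor
  · intro hcone
    have hr : ∀ a ∈ S, markovDirection r a ≠ 0 → r ⬝ᵥ markovDirection r a < 0 :=
      forall_pos_iff_forall_dotProduct_markovDirection_neg.1 fun i j hij =>
        mul_self_pos.2 (sub_ne_zero.2 hij)
    obtain ⟨f, hfA, hfS⟩ := exists_strongDual_eq_zero_on_submodule_neg_on_finite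
      ((Set.toFinite _).image (markovDirection r)) (K := LinearMap.ker A)
      (Submodule.closed_of_finiteDimensional _)
      (disjoint_convexHull_of_finiteCone_inter_eq_zero (dotProductEquiv ℝ _ r) hr hcone)
    set ψ := (dotProductEquiv ℝ (Fin n)).symm f.toLinearMap
    have hf : ∀ x, f x = ψ ⬝ᵥ x := fun x => by
      rw [← dotProductEquiv_apply_apply, LinearEquiv.apply_symm_apply]; rfl
    refine ⟨ψ, fun x hx => (hf x).symm.trans (hfA x (by simpa [hA, funext_iff] using hx)),
      forall_pos_iff_forall_dotProduct_markovDirection_neg.2 fun a ha hne => ?_⟩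
    rw [← hf]
    exact hfS _ ⟨a, ⟨ha, hne⟩, rfl⟩
  · rintro ⟨ψ, hψA, hψ⟩ v hv hAv
    exact eq_zero_of_mem_finiteCone_of_nonneg (dotProductEquiv ℝ _ ψ)
      (forall_pos_iff_forall_dotProduct_markovDirection_neg.1 hψ) hv
      (hψA v (by simpa [hA, funext_iff] using hAv)).ge

/-- A positive distribution `P⁰` on the constraint manifold
`L = {P : ∑_j m_{rj} p_j = M_r}` satisfies the local Markov-order minimum
condition `(P⁰ + Q(P⁰,P*)) ∩ L = {P⁰}` iff there is a linear functional
`ψ(P) = ∑ᵢ ψᵢ pᵢ` vanishing on `L⁰ = ker m` with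
`(ψᵢ − ψ_j)(p⁰ᵢ/p*ᵢ − p⁰_j/p*_j) > 0` whenever `p⁰ᵢ/p*ᵢ ≠ p⁰_j/p*_j`. -/
theorem local_markov_minimum_iff_separating_functional
    (n k : ℕ) (ps : Fin n → ℝ) (hps : ∀ i, 0 < ps i)
    (m : Fin (k + 1) → Fin n → ℝ) (M : Fin (k + 1) → ℝ)
    (p0 : Fin n → ℝ) (hp0 : ∀ i, 0 < p0 i)
    (hp0L : ∀ r, ∑ j, m r j * p0 j = M r) :
    let Q : Set (Fin n → ℝ) :=
      {v | ∃ w : Fin n → Fin n → ℝ, (∀ i j, 0 ≤ w i j) ∧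
        v = ∑ i, ∑ j ∈ Finset.univ.filter (fun j => j < i),
          (w i j * Real.sign (p0 j / ps j - p0 i / ps i)) •
            (fun l => (if l = i then (1 : ℝ) else 0) - if l = j then 1 else 0)}
    let L : Set (Fin n → ℝ) := {p | ∀ r, ∑ j, m r j * p j = M r}
    ({p | ∃ v ∈ Q, p = p0 + v} ∩ L = {p0}) ↔
      ∃ ψ : Fin n → ℝ,
        (∀ x : Fin n → ℝ, (∀ r, ∑ j, m r j * x j = 0) → ∑ i, ψ i * x i = 0) ∧
        (∀ i j, p0 i / ps i ≠ p0 j / ps j →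
          0 < (ψ i - ψ j) * (p0 i / ps i - p0 j / ps j)) :=
  local_markov_minimum_iff_separating_functional_general n k ps m M p0 hp0L
end

section
/- If a positive distribution P⁰ is a minimizer on L ∩ Δ₊ of a strictly convex f-divergence H_h(P‖P*) that is strictly decreasing along every non-stationary Markov chain with equilibrium P*, then P⁰ is a minimal element of the (global) Markov order ≻_{P*} on L ∩ Δ₊; conversely every local Markov-order minimum on L is a global Markov-order minimal point. -/
/-- `P¹` is reachable from `P⁰` by (the time-one map of) a Markov chain with
equilibrium `P*`: there is a rate matrix satisfying the balance condition and a
solution of the Kolmogorov equation from `P⁰` at `t = 0` to `P¹` at `t = 1`. -/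
def MarkovPre {n : ℕ} (ps : Fin n → ℝ) (P0 P1 : Fin n → ℝ) : Prop :=
  ∃ q : Fin n → Fin n → ℝ,
    (∀ i j, i ≠ j → 0 ≤ q i j) ∧ (∀ i, q i i = 0) ∧
    (∀ i, ∑ j ∈ Finset.univ.erase i, q i j * ps j
      = (∑ j ∈ Finset.univ.erase i, q j i) * ps i) ∧
    ∃ p : ℝ → Fin n → ℝ, p 0 = P0 ∧ p 1 = P1 ∧
      ∀ t ∈ Set.Icc (0 : ℝ) 1, ∀ i, HasDerivAt (fun s => p s i)
        (∑ j ∈ Finset.univ.erase i, (q i j * p t j - q j i * p t i)) t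

/-- The (global) Markov order with equilibrium `P*`: the closed transitive
closure of the reachability relation `MarkovPre`. -/
def MarkovOrder {n : ℕ} (ps : Fin n → ℝ) (P0 P1 : Fin n → ℝ) : Prop :=
  (P0, P1) ∈ closure {pr : (Fin n → ℝ) × (Fin n → ℝ) |
    Relation.TransGen (MarkovPre ps) pr.1 pr.2}

/-! Every `f`-divergence `H_g(· ‖ P*)` with `g : ℝ → ℝ` convex and differentiable is nonincreasing
along the Kolmogorov flow of a chain with equilibrium `P*`: the tangent-line inequality for `g`
bounds its time derivative by a double sum that vanishes by the balance condition. Being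
continuous, it is then nonincreasing along the whole Markov order.

For the first claim, extend `h` by its tangent line below the smallest ratio `P⁰ᵢ / P*ᵢ`,
`P¹ᵢ / P*ᵢ`: a successor `P¹ ∈ L ∩ Δ₊` of `P⁰` has `H_h(P¹) ≤ H_h(P⁰)`, so it is a second
minimiser of the strictly convex `H_h` on the convex set `L ∩ Δ₊`, hence `P¹ = P⁰`.

For the second, apply the monotonicity to smoothings of the hinges `(x - t)₊`: for the levels
`c = P⁰ / P*`, the vector `v = P¹ - P⁰` then puts nonpositive mass on every set of indices closed
upwards for `c`. Such a `v` is a nonnegative combination of moves `e_a - e_b` with `c_a < c_b`: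
take the highest level `c_a` with `v_a > 0` and the lowest level `c_b > c_a` with `v_b < 0`;
splitting off `min (v_a, -v_b) • (e_a - e_b)` keeps the cut conditions and shrinks the support. So
`P¹ ∈ (P⁰ + Q(P⁰, P*)) ∩ L = {P⁰}`. -/

open Finset Filter Topology Real

theorem ConvexOn.deriv_mul_sub_le {S : Set ℝ} {f : ℝ → ℝ} (hf : ConvexOn ℝ S f) {x y : ℝ}
    (hx : x ∈ S) (hy : y ∈ S) (hfd : DifferentiableAt ℝ f x) :
    deriv f x * (y - x) ≤ f y - f x := by
  rcases lt_trichotomy x y with hxy | rfl | hyx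
  · have := hf.deriv_le_slope hx hy hxy hfd
    rwa [slope_def_field, le_div_iff₀ (sub_pos.2 hxy)] at this
  · simp
  · have := hf.slope_le_deriv hy hx hyx hfd
    rw [slope_def_field, div_le_iff₀ (sub_pos.2 hyx)] at this
    linarith

theorem HasDerivAt.ite_le {f₁ f₂ : ℝ → ℝ} {a f' : ℝ} (h₁ : HasDerivAt f₁ f' a)
    (h₂ : HasDerivAt f₂ f' a) (h : f₁ a = f₂ a) :
    HasDerivAt (fun x => if x ≤ a then f₁ x else f₂ x) f' a := by
  have hIic : HasDerivWithinAt (fun x => if x ≤ a then f₁ x else f₂ x) f' (Set.Iic a) a :=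
    h₁.hasDerivWithinAt.congr (fun x hx => if_pos hx) (if_pos le_rfl)
  have hIci : HasDerivWithinAt (fun x => if x ≤ a then f₁ x else f₂ x) f' (Set.Ici a) a := by
    refine h₂.hasDerivWithinAt.congr (fun x hx => ?_) (by simp [h])
    rcases (Set.mem_Ici.1 hx).eq_or_lt with rfl | hlt
    · simp [h]
    · simp [not_le.2 hlt]
  simpa [Set.Iic_union_Ici] using hIic.union hIci

noncomputable def tangentExt (g : ℝ → ℝ) (a x : ℝ) : ℝ :=
  if x ≤ a then g a + deriv g a * (x - a) else g x

section TangentExt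

variable {g : ℝ → ℝ} {a : ℝ}

theorem tangentExt_of_le {x : ℝ} (hx : a ≤ x) : tangentExt g a x = g x := by
  rcases hx.eq_or_lt with rfl | hlt
  · simp [tangentExt]
  · simp [tangentExt, not_le.2 hlt]

theorem hasDerivAt_tangentExt (hd : ∀ x ∈ Set.Ici a, DifferentiableAt ℝ g x) (x : ℝ) :
    HasDerivAt (tangentExt g a) (deriv g (max a x)) x := by
  have hline : HasDerivAt (fun y => g a + deriv g a * (y - a)) (deriv g a) x := by
    simpa using (((hasDerivAt_id x).sub_const a).const_mul (deriv g a)).const_add (g a)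
  rcases lt_trichotomy x a with hxa | rfl | hax
  · rw [max_eq_left hxa.le]
    refine hline.congr_of_eventuallyEq ?_
    filter_upwards [eventually_lt_nhds hxa] with y hy
    simp [tangentExt, hy.le]
  · rw [max_self]
    exact hline.ite_le (hd x Set.self_mem_Ici).hasDerivAt (by simp)
  · rw [max_eq_right hax.le]
    refine (hd x hax.le).hasDerivAt.congr_of_eventuallyEq ?_
    filter_upwards [eventually_gt_nhds hax] with y hy
    simp [tangentExt, not_le.2 hy]

theorem differentiable_tangentExt (hd : ∀ x ∈ Set.Ici a, DifferentiableAt ℝ g x) :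
    Differentiable ℝ (tangentExt g a) :=
  fun x => (hasDerivAt_tangentExt hd x).differentiableAt

theorem convexOn_tangentExt (hg : ConvexOn ℝ (Set.Ici a) g)
    (hd : ∀ x ∈ Set.Ici a, DifferentiableAt ℝ g x) :
    ConvexOn ℝ Set.univ (tangentExt g a) := by
  refine Monotone.convexOn_univ_of_deriv (differentiable_tangentExt hd) fun x y hxy => ?_
  rw [(hasDerivAt_tangentExt hd x).deriv, (hasDerivAt_tangentExt hd y).deriv]
  exact hg.monotoneOn_deriv hd (le_max_left a x) (le_max_left a y) (max_le_max_left a hxy)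

end TangentExt

/-- The exponential profile vanishes together with its derivative at `t`, so its tangent
extension is `0` on `(-∞, t]`. -/
noncomputable def smoothHinge (t δ : ℝ) : ℝ → ℝ :=
  tangentExt (fun x => x - t - δ + δ * exp ((t - x) / δ)) t

section SmoothHinge

variable {t δ : ℝ}

theorem hasDerivAt_smoothHinge_profile (hδ : δ ≠ 0) (x : ℝ) :
    HasDerivAt (fun x => x - t - δ + δ * exp ((t - x) / δ)) (1 - exp ((t - x) / δ)) x := by
  refine (((hasDerivAt_id' x).sub_const t).sub_const δ).fun_add
    ((((hasDerivAt_const x t).fun_sub (hasDerivAt_id' x)).div_const δ).exp.const_mul δ)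
    |>.congr_deriv ?_
  field_simp
  ring

theorem convexOn_smoothHinge (hδ : 0 < δ) : ConvexOn ℝ Set.univ (smoothHinge t δ) := by
  have hd := fun x => hasDerivAt_smoothHinge_profile (t := t) hδ.ne' x
  refine convexOn_tangentExt (ConvexOn.subset ?_ (Set.subset_univ _) (convex_Ici t))
    fun x _ => (hd x).differentiableAt
  refine Monotone.convexOn_univ_of_deriv (fun x => (hd x).differentiableAt) fun x y hxy => ?_
  rw [(hd x).deriv, (hd y).deriv]
  gcongr

theorem differentiable_smoothHinge (hδ : 0 < δ) : Differentiable ℝ (smoothHinge t δ) :=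
  differentiable_tangentExt fun x _ => (hasDerivAt_smoothHinge_profile hδ.ne' x).differentiableAt

theorem smoothHinge_mem_Icc (hδ : 0 < δ) (x : ℝ) :
    smoothHinge t δ x ∈ Set.Icc (max (x - t) 0 - δ) (max (x - t) 0) := by
  rcases le_or_gt x t with hxt | htx
  · rw [smoothHinge, tangentExt, if_pos hxt, (hasDerivAt_smoothHinge_profile hδ.ne' t).deriv,
      max_eq_right (sub_nonpos.2 hxt)]
    simp [hδ.le]
  · rw [smoothHinge, tangentExt_of_le htx.le, max_eq_left (sub_pos.2 htx).le]
    have h1 : exp ((t - x) / δ) ≤ 1 :=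
      exp_le_one_iff.2 (div_nonpos_of_nonpos_of_nonneg (by linarith) hδ.le)
    have h0 := exp_pos ((t - x) / δ)
    constructor <;> nlinarith

theorem tendsto_smoothHinge (t x : ℝ) :
    Tendsto (fun δ => smoothHinge t δ x) (𝓝[>] 0) (𝓝 (max (x - t) 0)) := by
  refine tendsto_of_tendsto_of_tendsto_of_le_of_le'
    (g := fun δ => max (x - t) 0 - δ) ?_ tendsto_const_nhds ?_ ?_
  · simpa using (tendsto_const_nhds (x := max (x - t) 0)).sub
      (tendsto_nhdsWithin_of_tendsto_nhds (tendsto_id (x := 𝓝 (0 : ℝ))))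
  all_goals filter_upwards [self_mem_nhdsWithin] with δ hδ
  exacts [(smoothHinge_mem_Icc hδ x).1, (smoothHinge_mem_Icc hδ x).2]

end SmoothHinge

theorem exists_pos_forall_le {ι : Type*} [Finite ι] {f : ι → ℝ} (hf : ∀ i, 0 < f i) :
    ∃ ε > 0, ∀ i, ε ≤ f i :=
  ((eventually_mem_nhdsWithin (a := (0 : ℝ)) (s := Set.Ioi 0)).and
    (eventually_all.2 fun i => nhdsWithin_le_nhds (eventually_le_nhds (hf i)))).exists

theorem le_of_mem_closure_transGen {X α : Type*} [TopologicalSpace X] [TopologicalSpace α]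
    [Preorder α] [OrderClosedTopology α] {r : X → X → Prop} {F : X → α} (hF : Continuous F)
    (hr : ∀ ⦃x y⦄, r x y → F y ≤ F x) {x y : X}
    (h : (x, y) ∈ closure {p : X × X | Relation.TransGen r p.1 p.2}) : F y ≤ F x := by
  refine closure_minimal ?_ (isClosed_le (hF.comp continuous_snd) (hF.comp continuous_fst)) h
  rintro ⟨x, y⟩ (hxy : Relation.TransGen r x y)
  induction hxy with
  | single h => exact hr h
  | tail _ h ih => exact (hr h).trans ih

noncomputable def fDivergence {ι : Type*} [Fintype ι] (ps : ι → ℝ) (g : ℝ → ℝ) (p : ι → ℝ) : ℝ :=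
  ∑ i, ps i * g (p i / ps i)

section FDivergence

variable {ι : Type*} [Fintype ι] {ps : ι → ℝ} {g : ℝ → ℝ}

theorem continuous_fDivergence (hg : Continuous g) : Continuous (fDivergence ps g) := by
  unfold fDivergence
  fun_prop

theorem hasDerivAt_fDivergence_comp (hps : ∀ i, ps i ≠ 0) (hg : Differentiable ℝ g)
    {γ : ℝ → ι → ℝ} {γ' : ι → ℝ} {t : ℝ} (hγ : ∀ i, HasDerivAt (fun s => γ s i) (γ' i) t) :
    HasDerivAt (fun s => fDivergence ps g (γ s)) (∑ i, deriv g (γ t i / ps i) * γ' i) t := by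
  refine HasDerivAt.fun_sum fun i _ => ?_
  refine (((hg _).hasDerivAt.comp t ((hγ i).div_const (ps i))).const_mul (ps i)).congr_deriv ?_
  field_simp [hps i]

theorem strictConvexOn_fDivergence (hps : ∀ i, 0 < ps i) (hg : StrictConvexOn ℝ (Set.Ioi 0) g) :
    StrictConvexOn ℝ {p : ι → ℝ | ∀ i, 0 < p i} (fDivergence ps g) := by
  refine ⟨fun p hp q hq a b ha hb hab i => convex_Ioi (0 : ℝ) (hp i) (hq i) ha hb hab,
    fun p hp q hq hpq a b ha hb hab => ?_⟩
  obtain ⟨i₀, hi₀⟩ := Function.ne_iff.1 hpq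
  have hmix : ∀ i, (a • p + b • q) i / ps i = a • (p i / ps i) + b • (q i / ps i) := fun i => by
    simp only [Pi.add_apply, Pi.smul_apply, smul_eq_mul]
    ring
  have hmem : ∀ {r : ι → ℝ}, (∀ i, 0 < r i) → ∀ i, r i / ps i ∈ Set.Ioi 0 :=
    fun hr i => div_pos (hr i) (hps i)
  simp only [fDivergence, smul_eq_mul, mul_sum, ← sum_add_distrib, hmix]
  refine sum_lt_sum (fun i _ => ?_) ⟨i₀, mem_univ _, ?_⟩
  · have := hg.convexOn.2 (hmem hp i) (hmem hq i) ha.le hb.le hab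
    simp only [smul_eq_mul] at this ⊢
    nlinarith [hps i]
  · have := hg.2 (hmem hp i₀) (hmem hq i₀)
      (by rwa [Ne, div_left_inj' (hps i₀).ne']) ha hb hab
    simp only [smul_eq_mul] at this ⊢
    nlinarith [hps i₀]

end FDivergence

section Generator

variable {ι : Type*} [Fintype ι] {ps : ι → ℝ} {q : ι → ι → ℝ} {g : ℝ → ℝ}

theorem sum_sum_mul_sub_eq_zero_of_balance (hbal : ∀ i, ∑ j, q i j * ps j = (∑ j, q j i) * ps i)
    (φ : ι → ℝ) : ∑ i, ∑ j, q i j * ps j * (φ j - φ i) = 0 := by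
  have h : ∀ i, ∑ j, q i j * ps j * (φ j - φ i)
      = ∑ j, q i j * ps j * φ j - ∑ j, q j i * ps i * φ i :=
    fun i => by simp only [mul_sub, sum_sub_distrib, ← sum_mul, hbal i]
  rw [sum_congr rfl fun i _ => h i, sum_sub_distrib, sum_comm, sub_self]

theorem sum_flux_eq_of_balance (hps : ∀ i, ps i ≠ 0)
    (hbal : ∀ i, ∑ j, q i j * ps j = (∑ j, q j i) * ps i) (p : ι → ℝ) (i : ι) :
    ∑ j, (q i j * p j - q j i * p i) = ∑ j, q i j * ps j * (p j / ps j - p i / ps i) := by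
  have hp : ∀ j, p j = ps j * (p j / ps j) := fun j => (mul_div_cancel₀ _ (hps j)).symm
  rw [sum_sub_distrib, ← sum_mul, hp i, ← mul_assoc, ← hbal i, sum_mul, ← sum_sub_distrib]
  refine sum_congr rfl fun j _ => ?_
  rw [← hp i]
  nth_rewrite 1 [hp j]
  ring

theorem sum_deriv_mul_flux_nonpos (hps : ∀ i, 0 < ps i) (hg : ConvexOn ℝ Set.univ g)
    (hgd : Differentiable ℝ g) (hq : ∀ i j, 0 ≤ q i j)
    (hbal : ∀ i, ∑ j, q i j * ps j = (∑ j, q j i) * ps i) (p : ι → ℝ) :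
    ∑ i, deriv g (p i / ps i) * ∑ j, (q i j * p j - q j i * p i) ≤ 0 := by
  set c := fun i => p i / ps i
  calc ∑ i, deriv g (c i) * ∑ j, (q i j * p j - q j i * p i)
      = ∑ i, ∑ j, q i j * ps j * (deriv g (c i) * (c j - c i)) := by
        refine sum_congr rfl fun i _ => ?_
        rw [sum_flux_eq_of_balance (fun i => (hps i).ne') hbal, mul_sum]
        exact sum_congr rfl fun j _ => by ring
    _ ≤ ∑ i, ∑ j, q i j * ps j * (g (c j) - g (c i)) :=
        sum_le_sum fun i _ => sum_le_sum fun j _ => mul_le_mul_of_nonneg_left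
          (hg.deriv_mul_sub_le (Set.mem_univ _) (Set.mem_univ _) (hgd _))
          (mul_nonneg (hq i j) (hps j).le)
    _ = 0 := sum_sum_mul_sub_eq_zero_of_balance hbal _

end Generator

section Markov

variable {n : ℕ} {ps : Fin n → ℝ} {g : ℝ → ℝ} {a b : Fin n → ℝ}

theorem fDivergence_le_of_markovPre (hps : ∀ i, 0 < ps i) (hg : ConvexOn ℝ Set.univ g)
    (hgd : Differentiable ℝ g) (hab : MarkovPre ps a b) :
    fDivergence ps g b ≤ fDivergence ps g a := by
  obtain ⟨q, hq, hqd, hbal, γ, rfl, rfl, hγ⟩ := hab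
  have hq' : ∀ i j, 0 ≤ q i j := fun i j =>
    (eq_or_ne i j).elim (fun h => h ▸ (hqd i).ge) (hq i j)
  have hbal' : ∀ i, ∑ j, q i j * ps j = (∑ j, q j i) * ps i := fun i => by
    rw [← sum_erase (f := fun j => q i j * ps j) (a := i) _ (by simp [hqd i]),
      ← sum_erase (f := fun j => q j i) _ (hqd i)]
    exact hbal i
  have hφ : ∀ t ∈ Set.Icc (0 : ℝ) 1, HasDerivAt (fun s => fDivergence ps g (γ s))
      (∑ i, deriv g (γ t i / ps i) * ∑ j, (q i j * γ t j - q j i * γ t i)) t :=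
    fun t ht => hasDerivAt_fDivergence_comp (fun i => (hps i).ne') hgd fun i => by
      rw [← sum_erase (f := fun j => q i j * γ t j - q j i * γ t i) _ (sub_self _)]
      exact hγ t ht i
  have hanti : AntitoneOn (fun s => fDivergence ps g (γ s)) (Set.Icc 0 1) :=
    antitoneOn_of_hasDerivWithinAt_nonpos (convex_Icc 0 1)
      (fun t ht => (hφ t ht).continuousAt.continuousWithinAt)
      (fun t ht => (hφ t (interior_subset ht)).hasDerivWithinAt)
      (fun t _ => sum_deriv_mul_flux_nonpos hps hg hgd hq' hbal' _)
  exact hanti (Set.left_mem_Icc.2 zero_le_one) (Set.right_mem_Icc.2 zero_le_one) zero_le_one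

theorem fDivergence_le_of_markovOrder (hps : ∀ i, 0 < ps i) (hg : ConvexOn ℝ Set.univ g)
    (hgd : Differentiable ℝ g) (hab : MarkovOrder ps a b) :
    fDivergence ps g b ≤ fDivergence ps g a :=
  le_of_mem_closure_transGen (continuous_fDivergence hgd.continuous)
    (fun _ _ => fDivergence_le_of_markovPre hps hg hgd) hab

theorem fDivergence_hinge_le_of_markovOrder (hps : ∀ i, 0 < ps i) (hab : MarkovOrder ps a b)
    (t : ℝ) :
    fDivergence ps (fun x => max (x - t) 0) b ≤ fDivergence ps (fun x => max (x - t) 0) a := by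
  have hlim : ∀ p, Tendsto (fun δ => fDivergence ps (smoothHinge t δ) p) (𝓝[>] 0)
      (𝓝 (fDivergence ps (fun x => max (x - t) 0) p)) := fun p =>
    tendsto_finsetSum _ fun i _ => (tendsto_smoothHinge t _).const_mul (ps i)
  refine le_of_tendsto_of_tendsto (hlim b) (hlim a) ?_
  filter_upwards [self_mem_nhdsWithin] with δ hδ
  exact fDivergence_le_of_markovOrder hps (convexOn_smoothHinge hδ)
    (differentiable_smoothHinge hδ) hab

end Markov

noncomputable def cutWeight (t x y : ℝ) : ℝ :=
  if t < x then y else if x = t then max y 0 else 0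

/-- The largest total `v`-mass of a set of indices that is closed upwards for the levels `c` and
whose lowest level is `t`. -/
noncomputable def cut {ι : Type*} [Fintype ι] (c v : ι → ℝ) (t : ℝ) : ℝ :=
  ∑ i, cutWeight t (c i) (v i)

theorem cutWeight_le_hinge_sub {s : ℝ} (hs : 0 < s) (t x₀ x₁ : ℝ) :
    cutWeight t (x₀ / s) (x₁ - x₀) ≤ s * max (x₁ / s - t) 0 - s * max (x₀ / s - t) 0 := by
  have hscale : ∀ x, s * max (x / s - t) 0 = max (x - t * s) 0 := fun x => by
    rw [mul_max_of_nonneg _ _ hs.le, mul_sub, mul_div_cancel₀ _ hs.ne', mul_zero, mul_comm]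
  rw [hscale, hscale, cutWeight]
  split_ifs with h₁ h₂
  · rw [lt_div_iff₀ hs] at h₁
    rw [max_eq_left (a := x₀ - t * s) (by linarith)]
    linarith [le_max_left (x₁ - t * s) 0]
  · rw [div_eq_iff hs.ne'] at h₂
    simp [h₂]
  · have h₀ : x₀ ≤ t * s := (div_le_iff₀ hs).1 (not_lt.1 h₁)
    rw [max_eq_right (a := x₀ - t * s) (by linarith)]
    simp

theorem cutWeight_sub_of_le {δ y : ℝ} (hδ : 0 ≤ δ) (hy : δ ≤ y) (t x : ℝ) :
    cutWeight t x (y - δ) = cutWeight t x y - if t ≤ x then δ else 0 := by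
  rcases lt_trichotomy t x with h | rfl | h
  · simp [cutWeight, h, h.le]
  · simp only [cutWeight, lt_irrefl, if_false, if_true, le_refl]
    rw [max_eq_left (by linarith), max_eq_left (by linarith)]
  · simp [cutWeight, h.ne, not_lt.2 h.le, not_le.2 h]

theorem cutWeight_add_of_nonpos {δ y : ℝ} (hδ : 0 ≤ δ) (hy : y + δ ≤ 0) (t x : ℝ) :
    cutWeight t x (y + δ) = cutWeight t x y + if t < x then δ else 0 := by
  rcases lt_trichotomy t x with h | rfl | h
  · simp [cutWeight, h]
  · simp only [cutWeight, lt_irrefl, if_false, if_true, add_zero]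
    rw [max_eq_right hy, max_eq_right (by linarith)]
  · simp [cutWeight, h.ne, not_lt.2 h.le]

section Cut

variable {ι : Type*} [Fintype ι] {c v : ι → ℝ} {a b : ι}

theorem cut_le_fDivergence_hinge_sub {ps : ι → ℝ} (hps : ∀ i, 0 < ps i) (p₀ p₁ : ι → ℝ)
    (t : ℝ) : cut (fun i => p₀ i / ps i) (p₁ - p₀) t ≤
      fDivergence ps (fun x => max (x - t) 0) p₁ - fDivergence ps (fun x => max (x - t) 0) p₀ := by
  rw [fDivergence, fDivergence, ← sum_sub_distrib]
  exact sum_le_sum fun i _ => cutWeight_le_hinge_sub (hps i) t _ _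

theorem sum_ite_lt_add_le_cut [DecidableEq ι] (ha : 0 ≤ v a) :
    ∑ i, (if c a < c i then v i else 0) + v a ≤ cut c v (c a) := by
  have hva : v a = ∑ i, if i = a then v i else 0 := by simp
  rw [hva, ← sum_add_distrib]
  refine sum_le_sum fun i _ => ?_
  by_cases hia : i = a
  · subst hia
    simp [cutWeight, ha]
  · simp only [hia, if_false, add_zero, cutWeight]
    split_ifs <;> simp

theorem exists_transfer_pair (hcut : ∀ t, cut c v t ≤ 0) (hpos : ∃ i, 0 < v i) :
    ∃ a b, 0 < v a ∧ v b < 0 ∧ c a < c b ∧ ∀ i, c a < c i → c i < c b → v i = 0 := by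
  classical
  obtain ⟨a, ha, hamax⟩ := exists_max_image {i | 0 < v i} c (by simpa [Finset.Nonempty] using hpos)
  simp only [mem_filter, mem_univ, true_and] at ha hamax
  have hneg : ∃ i, c a < c i ∧ v i < 0 := by
    have hlt : ∑ i, (if c a < c i then v i else 0) < ∑ _i : ι, (0 : ℝ) := by
      rw [sum_const_zero]
      linarith [sum_ite_lt_add_le_cut (c := c) ha.le, hcut (c a)]
    obtain ⟨i, -, hi⟩ := exists_lt_of_sum_lt hlt
    by_cases h : c a < c i
    · exact ⟨i, h, by simpa [h] using hi⟩
    · simp [h] at hi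
  obtain ⟨b, hb, hbmin⟩ := exists_min_image {i | c a < c i ∧ v i < 0} c
    (by simpa [Finset.Nonempty] using hneg)
  simp only [mem_filter, mem_univ, true_and] at hb hbmin
  refine ⟨a, b, ha, hb.2, hb.1, fun i hai hib => ?_⟩
  rcases lt_trichotomy (v i) 0 with h | h | h
  · exact absurd (hbmin i ⟨hai, h⟩) (not_le.2 hib)
  · exact h
  · exact absurd (hamax i h) (not_le.2 hai)

end Cut

section Transfer

variable {ι : Type*} [Fintype ι] [DecidableEq ι] {c v : ι → ℝ} {a b : ι} {δ : ℝ}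

def massTransfers (c : ι → ℝ) : Set (ι → ℝ) :=
  {x | ∃ a b, c a < c b ∧ x = Pi.single a 1 - Pi.single b 1}

theorem cut_sub_transfer (hab : a ≠ b) (t : ℝ) :
    cut c (v - δ • (Pi.single a 1 - Pi.single b 1)) t = cut c v t
      + (cutWeight t (c a) (v a - δ) - cutWeight t (c a) (v a))
      + (cutWeight t (c b) (v b + δ) - cutWeight t (c b) (v b)) := by
  rw [add_assoc, ← sub_eq_iff_eq_add', cut, cut, ← sum_sub_distrib]
  refine (Fintype.sum_eq_add a b hab fun i ⟨hia, hib⟩ => ?_).trans ?_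
  · simp [hia, hib]
  · simp [hab, hab.symm, sub_eq_add_neg]

theorem cut_le_cut_add_of_gap (hb : v b ≤ 0) {t : ℝ} (hat : c a < t) (htb : t < c b)
    (hgap : ∀ i, c a < c i → c i < c b → v i = 0) : cut c v t ≤ cut c v (c b) + v b := by
  have hvb : v b = ∑ i, if i = b then v i else 0 := by simp
  rw [hvb, cut, cut, ← sum_add_distrib]
  refine sum_le_sum fun i _ => ?_
  by_cases hib : i = b
  · subst hib
    simp [cutWeight, htb, hb]
  simp only [hib, if_false, add_zero, cutWeight]
  split_ifs <;> first
    | exact le_rfl | exact le_max_left _ _ | exact le_max_right _ _ | linarith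
    | simp [hgap i (by order) (by order)]

theorem cut_sub_transfer_nonpos (hcut : ∀ t, cut c v t ≤ 0) (hδ : 0 ≤ δ) (ha : δ ≤ v a)
    (hb : δ ≤ -v b) (hab : c a < c b) (hgap : ∀ i, c a < c i → c i < c b → v i = 0) (t : ℝ) :
    cut c (v - δ • (Pi.single a 1 - Pi.single b 1)) t ≤ 0 := by
  rw [cut_sub_transfer (ne_of_apply_ne c hab.ne), cutWeight_sub_of_le hδ ha,
    cutWeight_add_of_nonpos hδ (by linarith)]
  have := hcut t
  by_cases hta : t ≤ c a
  · simp [hta, hta.trans_lt hab, this]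
  by_cases htb : t < c b
  · simp only [hta, htb, if_false, if_true]
    linarith [cut_le_cut_add_of_gap (by linarith) (not_le.1 hta) htb hgap, hcut (c b)]
  · simp [hta, htb, this]

theorem card_support_sub_transfer_lt (hab : a ≠ b) (ha : v a ≠ 0) (hb : v b ≠ 0)
    (h : v a = δ ∨ v b = -δ) :
    #{i | (v - δ • (Pi.single a 1 - Pi.single b 1) : ι → ℝ) i ≠ 0} < #{i | v i ≠ 0} := by
  refine card_lt_card ((ssubset_iff_of_subset fun i => ?_).2 ?_)
  · simp only [mem_filter, mem_univ, true_and]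
    by_cases hia : i = a
    · exact fun _ => hia ▸ ha
    by_cases hib : i = b
    · exact fun _ => hib ▸ hb
    simp [hia, hib]
  · rcases h with h | h
    · exact ⟨a, by simpa using ha, by simp [Pi.single_apply, hab, h]⟩
    · exact ⟨b, by simpa using hb, by simp [Pi.single_apply, hab.symm, h]⟩

theorem mem_hull_massTransfers_of_cut_nonpos (hsum : ∑ i, v i = 0) (hcut : ∀ t, cut c v t ≤ 0) :
    v ∈ PointedCone.hull ℝ (massTransfers c) := by
  induction hk : #{i | v i ≠ 0} using Nat.strong_induction_on generalizing v with
  | _ k ih =>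
  by_cases hpos : ∃ i, 0 < v i
  swap
  · push Not at hpos
    rw [show v = 0 from funext fun i =>
      (sum_eq_zero_iff_of_nonpos fun i _ => hpos i).1 hsum i (mem_univ i)]
    exact zero_mem _
  obtain ⟨a, b, hva, hvb, hab, hgap⟩ := exists_transfer_pair hcut hpos
  set δ := min (v a) (-v b)
  have hδ : 0 ≤ δ := le_min hva.le (by linarith)
  rw [← sub_add_cancel v (δ • (Pi.single a 1 - Pi.single b 1))]
  refine add_mem (ih _ ?_ ?_ ?_ rfl)
    (PointedCone.smul_mem _ hδ (PointedCone.subset_hull ⟨a, b, hab, rfl⟩))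
  · refine hk ▸ card_support_sub_transfer_lt (ne_of_apply_ne c hab.ne) hva.ne' hvb.ne ?_
    rcases min_choice (v a) (-v b) with h | h
    · exact .inl h.symm
    · exact .inr (by linarith)
  · simp [sum_sub_distrib, hsum, ← mul_sum]
  · exact cut_sub_transfer_nonpos hcut hδ (min_le_left _ _) (min_le_right _ _) hab hgap

end Transfer

/-- The cone `Q(P⁰, P*)` of the local minimum condition, for the levels `c = P⁰ / P*`. -/
noncomputable def localCone {n : ℕ} (c : Fin n → ℝ) : PointedCone ℝ (Fin n → ℝ) where
  carrier := {v | ∃ w : Fin n → Fin n → ℝ, (∀ i j, 0 ≤ w i j) ∧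
    v = ∑ i, ∑ j ∈ univ.filter (fun j => j < i), (w i j * Real.sign (c j - c i)) •
      (fun l => (if l = i then (1 : ℝ) else 0) - if l = j then 1 else 0)}
  add_mem' := by
    rintro _ _ ⟨w₁, hw₁, rfl⟩ ⟨w₂, hw₂, rfl⟩
    exact ⟨w₁ + w₂, fun i j => add_nonneg (hw₁ i j) (hw₂ i j),
      by simp [add_mul, add_smul, sum_add_distrib]⟩
  zero_mem' := ⟨0, fun _ _ => le_rfl, by simp⟩
  smul_mem' := by
    rintro ⟨r, hr⟩ _ ⟨w, hw, rfl⟩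
    exact ⟨r • w, fun i j => mul_nonneg hr (hw i j), by simp [smul_sum, mul_assoc, mul_smul]⟩

section LocalCone

variable {n : ℕ} {c : Fin n → ℝ}

theorem sign_smul_mem_localCone {i j : Fin n} (hji : j < i) :
    Real.sign (c j - c i) • (Pi.single i 1 - Pi.single j 1 : Fin n → ℝ) ∈ localCone c := by
  refine ⟨fun i' j' => if i' = i ∧ j' = j then 1 else 0,
    fun _ _ => by dsimp only; split_ifs <;> norm_num, ?_⟩
  simp only [ite_and, ite_mul, one_mul, zero_mul, ite_smul, zero_smul]
  rw [sum_eq_single i (fun i' _ hi' => by simp [hi']) (by simp),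
    sum_eq_single j (fun j' _ hj' => by simp [hj']) (by simp [hji])]
  ext l
  simp [Pi.single_apply]

theorem single_sub_single_mem_localCone {a b : Fin n} (h : c a < c b) :
    Pi.single a 1 - Pi.single b 1 ∈ localCone c := by
  rcases lt_or_gt_of_ne (ne_of_apply_ne c h.ne) with hab | hba
  · simpa [Real.sign_of_neg (sub_neg.2 h)] using sign_smul_mem_localCone (c := c) hab
  · simpa [Real.sign_of_pos (sub_pos.2 h)] using sign_smul_mem_localCone (c := c) hba

theorem hull_massTransfers_le_localCone : PointedCone.hull ℝ (massTransfers c) ≤ localCone c :=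
  Submodule.span_le.2 fun _ ⟨_, _, h, hx⟩ => hx ▸ single_sub_single_mem_localCone h

end LocalCone

section MinimalPoints

variable {n : ℕ} {ps : Fin n → ℝ} {p₀ p₁ : Fin n → ℝ}

theorem convex_setOf_pos_sum_eq_one_linear {ι κ : Type*} [Fintype ι] (m : κ → ι → ℝ)
    (M : κ → ℝ) :
    Convex ℝ {p : ι → ℝ | (∀ i, 0 < p i) ∧ ∑ i, p i = 1 ∧ ∀ r, ∑ j, m r j * p j = M r} := by
  rintro p ⟨hp, hp1, hpL⟩ q ⟨hq, hq1, hqL⟩ a b ha hb hab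
  refine ⟨fun i => convex_Ioi (0 : ℝ) (hp i) (hq i) ha hb hab, ?_, fun r => ?_⟩
  · simp [sum_add_distrib, ← mul_sum, hp1, hq1, hab]
  · simp only [Pi.add_apply, Pi.smul_apply, smul_eq_mul, mul_add, sum_add_distrib]
    simp only [mul_left_comm _ a, mul_left_comm _ b, ← mul_sum, hpL, hqL]
    rw [← add_mul, hab, one_mul]

theorem eq_of_markovOrder_of_isMinOn {h : ℝ → ℝ} {S : Set (Fin n → ℝ)} (hps : ∀ i, 0 < ps i)
    (hS : Convex ℝ S) (hSpos : S ⊆ {p | ∀ i, 0 < p i}) (hh : StrictConvexOn ℝ (Set.Ioi 0) h)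
    (hhd : ∀ x ∈ Set.Ioi (0 : ℝ), DifferentiableAt ℝ h x) (hmin : IsMinOn (fDivergence ps h) S p₀)
    (hp₀ : p₀ ∈ S) (hp₁ : p₁ ∈ S) (hM : MarkovOrder ps p₀ p₁) : p₁ = p₀ := by
  obtain ⟨ε, hε, hεle⟩ := exists_pos_forall_le fun i =>
    lt_min (div_pos (hSpos hp₀ i) (hps i)) (div_pos (hSpos hp₁ i) (hps i))
  have hext : ∀ p, (∀ i, ε ≤ p i / ps i) →
      fDivergence ps (tangentExt h ε) p = fDivergence ps h p := fun p hp =>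
    sum_congr rfl fun i _ => by rw [tangentExt_of_le (hp i)]
  have hd : ∀ x ∈ Set.Ici ε, DifferentiableAt ℝ h x := fun x hx => hhd x (hε.trans_le hx)
  have hle : fDivergence ps h p₁ ≤ fDivergence ps h p₀ := by
    rw [← hext p₀ fun i => (hεle i).trans (min_le_left _ _),
      ← hext p₁ fun i => (hεle i).trans (min_le_right _ _)]
    exact fDivergence_le_of_markovOrder hps
      (convexOn_tangentExt (hh.convexOn.subset (Set.Ici_subset_Ioi.2 hε) (convex_Ici ε)) hd)
      (differentiable_tangentExt hd) hM
  have hmin₁ : IsMinOn (fDivergence ps h) S p₁ :=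
    isMinOn_iff.2 fun y hy => hle.trans (isMinOn_iff.1 hmin y hy)
  exact ((strictConvexOn_fDivergence hps hh).subset hSpos hS).eq_of_isMinOn hmin₁ hmin hp₁ hp₀

theorem sub_mem_localCone_of_markovOrder (hps : ∀ i, 0 < ps i) (hsum : ∑ i, p₁ i = ∑ i, p₀ i)
    (hM : MarkovOrder ps p₀ p₁) : p₁ - p₀ ∈ localCone (fun i => p₀ i / ps i) :=
  hull_massTransfers_le_localCone <| mem_hull_massTransfers_of_cut_nonpos
    (by simp [sum_sub_distrib, hsum]) fun t => (cut_le_fDivergence_hinge_sub hps p₀ p₁ t).trans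
      (sub_nonpos.2 (fDivergence_hinge_le_of_markovOrder hps hM t))

end MinimalPoints

theorem markov_order_minimal_points_general
    (n k : ℕ) (ps : Fin n → ℝ) (hps : ∀ i, 0 < ps i)
    (m : Fin (k + 1) → Fin n → ℝ) (M : Fin (k + 1) → ℝ)
    (p0 : Fin n → ℝ) (hp0 : ∀ i, 0 < p0 i) (hp01 : ∑ i, p0 i = 1)
    (hp0L : ∀ r, ∑ j, m r j * p0 j = M r) :
    -- minimality of `p0` in the Markov order on `L ∩ Δ₊`:
    let Minimal : Prop := ∀ p1 : Fin n → ℝ, (∀ i, 0 < p1 i) → (∑ i, p1 i = 1) →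
      (∀ r, ∑ j, m r j * p1 j = M r) → p1 ≠ p0 → ¬ MarkovOrder ps p0 p1
    -- the local Markov-order minimum (cone) condition:
    let LocalMin : Prop :=
      {p : Fin n → ℝ | ∃ v ∈ {v : Fin n → ℝ | ∃ w : Fin n → Fin n → ℝ,
          (∀ i j, 0 ≤ w i j) ∧
          v = ∑ i, ∑ j ∈ Finset.univ.filter (fun j => j < i),
            (w i j * Real.sign (p0 j / ps j - p0 i / ps i)) •
              (fun l => (if l = i then (1 : ℝ) else 0) - if l = j then 1 else 0)},
        p = p0 + v} ∩ {p | ∀ r, ∑ j, m r j * p j = M r} = {p0}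
    ((∃ h : ℝ → ℝ, StrictConvexOn ℝ (Set.Ioi 0) h ∧
        (∀ x ∈ Set.Ioi (0 : ℝ), DifferentiableAt ℝ h x) ∧
        -- `H_h` strictly decreases along every non-stationary chain:
        (∀ q : Fin n → Fin n → ℝ, (∀ i j, i ≠ j → 0 ≤ q i j) → (∀ i, q i i = 0) →
          (∀ i, ∑ j ∈ Finset.univ.erase i, q i j * ps j
            = (∑ j ∈ Finset.univ.erase i, q j i) * ps i) →
          ∀ p : Fin n → ℝ, (∀ i, 0 < p i) → (∑ i, p i = 1) →
            (fun i => ∑ j ∈ Finset.univ.erase i,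
              q i j * ps j * (p j / ps j - p i / ps i)) ≠ 0 →
            ∑ i, deriv h (p i / ps i) *
              (∑ j ∈ Finset.univ.erase i,
                q i j * ps j * (p j / ps j - p i / ps i)) < 0) ∧
        IsMinOn (fun p : Fin n → ℝ => ∑ i, ps i * h (p i / ps i))
          {p | (∀ i, 0 < p i) ∧ (∑ i, p i = 1) ∧ ∀ r, ∑ j, m r j * p j = M r}
          p0)
      → Minimal) ∧
    (LocalMin → Minimal) := by
  intro Minimal LocalMin
  refine ⟨fun ⟨h, hh, hhd, _, hmin⟩ p1 hp1 hp1sum hp1L hne hM => hne ?_,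
    fun hloc p1 _ hp1sum hp1L hne hM => hne ?_⟩
  · exact eq_of_markovOrder_of_isMinOn hps (convex_setOf_pos_sum_eq_one_linear m M)
      (fun p hp => hp.1) hh hhd hmin ⟨hp0, hp01, hp0L⟩ ⟨hp1, hp1sum, hp1L⟩ hM
  · have hv := sub_mem_localCone_of_markovOrder hps (hp1sum.trans hp01.symm) hM
    exact (hloc ▸ ⟨⟨p1 - p0, hv, by abel⟩, hp1L⟩ : p1 ∈ ({p0} : Set (Fin n → ℝ)))

/-- If a positive distribution `P⁰` minimizes on `L ∩ Δ₊` a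
strictly convex f-divergence `H_h(·‖P*)` which strictly decreases along every
non-stationary Markov chain with equilibrium `P*`, then `P⁰` is a minimal
element of the global Markov order `≻_{P*}` on `L ∩ Δ₊`; conversely, every
local Markov-order minimum on `L` (cone condition) is a global Markov-order
minimal point. -/
theorem markov_order_minimal_points
    (n k : ℕ) (ps : Fin n → ℝ) (hps : ∀ i, 0 < ps i) (hps1 : ∑ i, ps i = 1)
    (m : Fin (k + 1) → Fin n → ℝ) (M : Fin (k + 1) → ℝ)
    (p0 : Fin n → ℝ) (hp0 : ∀ i, 0 < p0 i) (hp01 : ∑ i, p0 i = 1)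
    (hp0L : ∀ r, ∑ j, m r j * p0 j = M r) :
    -- minimality of `p0` in the Markov order on `L ∩ Δ₊`:
    let Minimal : Prop := ∀ p1 : Fin n → ℝ, (∀ i, 0 < p1 i) → (∑ i, p1 i = 1) →
      (∀ r, ∑ j, m r j * p1 j = M r) → p1 ≠ p0 → ¬ MarkovOrder ps p0 p1
    -- the local Markov-order minimum (cone) condition:
    let LocalMin : Prop :=
      {p : Fin n → ℝ | ∃ v ∈ {v : Fin n → ℝ | ∃ w : Fin n → Fin n → ℝ,
          (∀ i j, 0 ≤ w i j) ∧
          v = ∑ i, ∑ j ∈ Finset.univ.filter (fun j => j < i),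
            (w i j * Real.sign (p0 j / ps j - p0 i / ps i)) •
              (fun l => (if l = i then (1 : ℝ) else 0) - if l = j then 1 else 0)},
        p = p0 + v} ∩ {p | ∀ r, ∑ j, m r j * p j = M r} = {p0}
    ((∃ h : ℝ → ℝ, StrictConvexOn ℝ (Set.Ioi 0) h ∧
        (∀ x ∈ Set.Ioi (0 : ℝ), DifferentiableAt ℝ h x) ∧
        -- `H_h` strictly decreases along every non-stationary chain:
        (∀ q : Fin n → Fin n → ℝ, (∀ i j, i ≠ j → 0 ≤ q i j) → (∀ i, q i i = 0) →
          (∀ i, ∑ j ∈ Finset.univ.erase i, q i j * ps j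
            = (∑ j ∈ Finset.univ.erase i, q j i) * ps i) →
          ∀ p : Fin n → ℝ, (∀ i, 0 < p i) → (∑ i, p i = 1) →
            (fun i => ∑ j ∈ Finset.univ.erase i,
              q i j * ps j * (p j / ps j - p i / ps i)) ≠ 0 →
            ∑ i, deriv h (p i / ps i) *
              (∑ j ∈ Finset.univ.erase i,
                q i j * ps j * (p j / ps j - p i / ps i)) < 0) ∧
        IsMinOn (fun p : Fin n → ℝ => ∑ i, ps i * h (p i / ps i))
          {p | (∀ i, 0 < p i) ∧ (∑ i, p i = 1) ∧ ∀ r, ∑ j, m r j * p j = M r}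
          p0)
      → Minimal) ∧
    (LocalMin → Minimal) :=
  markov_order_minimal_points_general n k ps hps m M p0 hp0 hp01 hp0L
end

section
/- If P⁰ ≻_{P*} P¹ (P¹ is reachable from P⁰ in the Markov order with equilibrium P*) then P¹ ∈ P⁰ + Q(P⁰,P*), i.e., P¹ − P⁰ lies in the cone of possible Markov velocities at P⁰. -/
/-!
A Markov evolution with equilibrium `P*` conserves mass, and for every smooth convex `f` the
quantity `∑ i, p*ᵢ f (pᵢ / p*ᵢ)` is a Lyapunov function of its Kolmogorov equation. Smoothing
`y ↦ max y 0` shows that every excess `∑ i, max (pᵢ - λ p*ᵢ) 0` is nonincreasing, and since these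
invariants are closed and transitive they survive the passage to the Markov order.

Comparing the excess of `P¹` and `P⁰` at a level `λ` of `P⁰ / P*` bounds the right derivative of the
excess at `P⁰` in the direction `v = P¹ - P⁰`: for every level `λ`, the states with `p⁰ / p*`
above `λ`, together with any states at level `λ`, do not gain mass in total. Such a `v` is then peeled off greedily, one
elementary transfer from a higher to a lower ratio at a time, and each transfer is a generator of
`Q(P⁰, P*)`.
-/

open Real
open scoped NNReal

noncomputable def smoothPosPart (ε y : ℝ) : ℝ := (y + √(y ^ 2 + ε ^ 2)) / 2

noncomputable def smoothPosPartDeriv (ε y : ℝ) : ℝ := (1 + y / √(y ^ 2 + ε ^ 2)) / 2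

section SmoothPosPart

variable {ε : ℝ}

theorem hasDerivAt_smoothPosPart (hε : ε ≠ 0) (y : ℝ) :
    HasDerivAt (smoothPosPart ε) (smoothPosPartDeriv ε y) y := by
  have h := (hasDerivAt_id' y).add (((hasDerivAt_pow 2 y).add_const (ε ^ 2)).sqrt (by positivity))
  refine (h.div_const 2).congr_deriv ?_
  rw [smoothPosPartDeriv]
  field_simp
  ring

theorem smoothPosPart_add_deriv_mul_le (hε : ε ≠ 0) (x y : ℝ) :
    smoothPosPart ε x + smoothPosPartDeriv ε x * (y - x) ≤ smoothPosPart ε y := by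
  have hx : 0 < √(x ^ 2 + ε ^ 2) := sqrt_pos.2 (by positivity)
  have hx2 : √(x ^ 2 + ε ^ 2) ^ 2 = x ^ 2 + ε ^ 2 := sq_sqrt (by positivity)
  -- Cauchy–Schwarz for the vectors `(x, ε)` and `(y, ε)`
  have hcs : x * y + ε ^ 2 ≤ √(x ^ 2 + ε ^ 2) * √(y ^ 2 + ε ^ 2) := by
    rw [← sqrt_mul (by positivity)]
    exact (le_abs_self _).trans (abs_le_sqrt (by nlinarith [sq_nonneg (ε * (x - y))]))
  have key : √(x ^ 2 + ε ^ 2) + x * (y - x) / √(x ^ 2 + ε ^ 2) ≤ √(y ^ 2 + ε ^ 2) := by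
    rw [← le_sub_iff_add_le', div_le_iff₀ hx]
    nlinarith
  calc smoothPosPart ε x + smoothPosPartDeriv ε x * (y - x)
      = (y + (√(x ^ 2 + ε ^ 2) + x * (y - x) / √(x ^ 2 + ε ^ 2))) / 2 := by
        rw [smoothPosPart, smoothPosPartDeriv]; ring
    _ ≤ smoothPosPart ε y := by rw [smoothPosPart]; gcongr

theorem smoothPosPart_zero (y : ℝ) : smoothPosPart 0 y = max y 0 := by
  rw [smoothPosPart, zero_pow two_ne_zero, add_zero, sqrt_sq_eq_abs]
  rcases le_total y 0 with h | h
  · rw [abs_of_nonpos h, max_eq_right h]; ring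
  · rw [abs_of_nonneg h, max_eq_left h]; ring

theorem continuous_smoothPosPart_left (y : ℝ) : Continuous fun ε => smoothPosPart ε y := by
  unfold smoothPosPart
  fun_prop

end SmoothPosPart

section Generator

variable {n : ℕ} {ps : Fin n → ℝ} {q : Fin n → Fin n → ℝ}

theorem sum_mul_ps_eq_of_balance
    (hbal : ∀ i, ∑ j ∈ Finset.univ.erase i, q i j * ps j
      = (∑ j ∈ Finset.univ.erase i, q j i) * ps i) (i : Fin n) :
    ∑ j, q i j * ps j = (∑ j, q j i) * ps i := by
  rw [← Finset.add_sum_erase _ _ (Finset.mem_univ i), ← Finset.add_sum_erase _ _ (Finset.mem_univ i),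
    hbal, add_mul]

theorem sum_mul_generator_nonpos (hps : ∀ i, 0 < ps i) (hq : ∀ i j, i ≠ j → 0 ≤ q i j)
    (hbal : ∀ i, ∑ j ∈ Finset.univ.erase i, q i j * ps j
      = (∑ j ∈ Finset.univ.erase i, q j i) * ps i)
    (x f g : Fin n → ℝ) (hfg : ∀ i j, f i * (x j / ps j - x i / ps i) ≤ g j - g i) :
    ∑ i, f i * ∑ j ∈ Finset.univ.erase i, (q i j * x j - q j i * x i) ≤ 0 := by
  have hbal' := sum_mul_ps_eq_of_balance hbal
  have hflux : ∀ i, ∑ j, (q i j * x j - q j i * x i)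
      = ∑ j, q i j * ps j * (x j / ps j - x i / ps i) := by
    intro i
    simp only [mul_sub, Finset.sum_sub_distrib, ← Finset.sum_mul, hbal']
    congr 1
    · exact Finset.sum_congr rfl fun j _ => by field_simp [(hps j).ne']
    · field_simp [(hps i).ne']
  calc ∑ i, f i * ∑ j ∈ Finset.univ.erase i, (q i j * x j - q j i * x i)
      = ∑ i, ∑ j, q i j * ps j * (f i * (x j / ps j - x i / ps i)) := by
        refine Finset.sum_congr rfl fun i _ => ?_
        rw [Finset.sum_erase _ (sub_self _), hflux, Finset.mul_sum]
        exact Finset.sum_congr rfl fun j _ => by ring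
    _ ≤ ∑ i, ∑ j, q i j * ps j * (g j - g i) := by
        refine Finset.sum_le_sum fun i _ => Finset.sum_le_sum fun j _ => ?_
        rcases eq_or_ne i j with rfl | hij
        · simp
        · exact mul_le_mul_of_nonneg_left (hfg i j) (mul_nonneg (hq i j hij) (hps j).le)
    _ = ∑ i, ∑ j, q i j * ps j * g j - ∑ i, (∑ j, q i j * ps j) * g i := by
        simp only [mul_sub, Finset.sum_sub_distrib, Finset.sum_mul]
    _ = 0 := by
        rw [sub_eq_zero, Finset.sum_comm]
        simp only [hbal', ← Finset.sum_mul]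

end Generator

section Lyapunov

variable {n : ℕ} {ps : Fin n → ℝ} {a b : Fin n → ℝ}

theorem MarkovPre.sum_mul_comp_div_le {f f' : ℝ → ℝ} (hps : ∀ i, 0 < ps i)
    (hf : ∀ x, HasDerivAt f (f' x) x) (htangent : ∀ x y, f x + f' x * (y - x) ≤ f y)
    (h : MarkovPre ps a b) :
    ∑ i, ps i * f (b i / ps i) ≤ ∑ i, ps i * f (a i / ps i) := by
  obtain ⟨q, hq, -, hbal, p, rfl, rfl, hp⟩ := h
  set G : ℝ → ℝ := fun t => ∑ i, ps i * f (p t i / ps i)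
  set G' : ℝ → ℝ := fun t =>
    ∑ i, f' (p t i / ps i) * ∑ j ∈ Finset.univ.erase i, (q i j * p t j - q j i * p t i)
  have hG : ∀ t ∈ Set.Icc (0 : ℝ) 1, HasDerivAt G (G' t) t := fun t ht =>
    HasDerivAt.fun_sum fun i _ => by
      refine (((hf _).comp t ((hp t ht i).div_const (ps i))).const_mul (ps i)).congr_deriv ?_
      field_simp [(hps i).ne']
  have hG' : ∀ t ∈ Set.Icc (0 : ℝ) 1, G' t ≤ 0 := fun t _ =>
    sum_mul_generator_nonpos hps hq hbal (p t) (fun i => f' (p t i / ps i))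
      (fun i => f (p t i / ps i)) fun i j => by
        linarith [htangent (p t i / ps i) (p t j / ps j)]
  have hanti : AntitoneOn G (Set.Icc 0 1) :=
    antitoneOn_of_hasDerivWithinAt_nonpos (convex_Icc 0 1)
      (fun t ht => (hG t ht).continuousAt.continuousWithinAt)
      (fun t ht => (hG t (interior_subset ht)).hasDerivWithinAt)
      (fun t ht => hG' t (interior_subset ht))
  exact hanti (Set.left_mem_Icc.2 zero_le_one) (Set.right_mem_Icc.2 zero_le_one) zero_le_one

theorem MarkovPre.sum_eq (hps : ∀ i, 0 < ps i) (h : MarkovPre ps a b) : ∑ i, b i = ∑ i, a i := by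
  have hcancel : ∀ x : Fin n → ℝ, ∑ i, ps i * (x i / ps i) = ∑ i, x i := fun x =>
    Finset.sum_congr rfl fun i _ => mul_div_cancel₀ _ (hps i).ne'
  have hle := h.sum_mul_comp_div_le hps (f := id) (fun x => hasDerivAt_id x) (fun x y => by simp)
  have hge := h.sum_mul_comp_div_le hps (f := Neg.neg) (fun x => hasDerivAt_neg x)
    (fun x y => by simp)
  simp only [id, mul_neg, Finset.sum_neg_distrib, neg_le_neg_iff, hcancel] at hle hge
  exact le_antisymm hle hge

noncomputable def excess (ps : Fin n → ℝ) (lam : ℝ) (x : Fin n → ℝ) : ℝ :=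
  ∑ i, max (x i - lam * ps i) 0

theorem continuous_excess (lam : ℝ) : Continuous (excess ps lam) := by
  unfold excess
  fun_prop

theorem MarkovPre.excess_le (hps : ∀ i, 0 < ps i) (h : MarkovPre ps a b) (lam : ℝ) :
    excess ps lam b ≤ excess ps lam a := by
  set S : ℝ → (Fin n → ℝ) → ℝ := fun ε x => ∑ i, ps i * smoothPosPart ε (x i / ps i - lam)
  have hS : ∀ ε ≠ 0, S ε b ≤ S ε a := fun ε hε =>
    h.sum_mul_comp_div_le hps (fun x => (hasDerivAt_smoothPosPart hε _).comp_sub_const x lam)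
      fun x y => by simpa using smoothPosPart_add_deriv_mul_le hε (x - lam) (y - lam)
  have hS0 : ∀ x, S 0 x = excess ps lam x := fun x => Finset.sum_congr rfl fun i _ => by
    rw [smoothPosPart_zero, mul_max_of_nonneg _ _ (hps i).le, mul_zero, mul_sub,
      mul_div_cancel₀ _ (hps i).ne', mul_comm]
  have hcont : ∀ x, Continuous fun ε => S ε x := fun x =>
    continuous_finsetSum _ fun i _ => (continuous_smoothPosPart_left _).const_mul _
  rw [← hS0, ← hS0]
  exact le_of_tendsto_of_tendsto (((hcont b).tendsto 0).mono_left nhdsWithin_le_nhds)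
    (((hcont a).tendsto 0).mono_left nhdsWithin_le_nhds)
    (eventually_nhdsWithin_of_forall (s := {0}ᶜ) hS)

end Lyapunov

theorem closure_setOf_transGen_subset {α : Type*} [TopologicalSpace α] {r s : α → α → Prop}
    (hrs : ∀ a b, r a b → s a b) (hs : ∀ a b c, s a b → s b c → s a c)
    (hclosed : IsClosed {x : α × α | s x.1 x.2}) :
    closure {x : α × α | Relation.TransGen r x.1 x.2} ⊆ {x : α × α | s x.1 x.2} := by
  refine closure_minimal ?_ hclosed
  rintro ⟨a, b⟩ (hab : Relation.TransGen r a b)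
  induction hab with
  | single h => exact hrs _ _ h
  | tail _ h ih => exact hs _ _ _ ih (hrs _ _ h)

section MarkovOrder

variable {n : ℕ} {ps : Fin n → ℝ} {a b : Fin n → ℝ}

theorem MarkovOrder.sum_eq (hps : ∀ i, 0 < ps i) (h : MarkovOrder ps a b) :
    ∑ i, b i = ∑ i, a i := by
  refine closure_setOf_transGen_subset (s := fun a b => ∑ i, b i = ∑ i, a i)
    (fun _ _ hab => hab.sum_eq hps) (fun _ _ _ hxy hyz => ?_)
    (isClosed_eq (by fun_prop) (by fun_prop)) h
  exact hyz.trans hxy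

theorem MarkovOrder.excess_le (hps : ∀ i, 0 < ps i) (h : MarkovOrder ps a b) (lam : ℝ) :
    excess ps lam b ≤ excess ps lam a :=
  closure_setOf_transGen_subset (s := fun a b => ∀ lam, excess ps lam b ≤ excess ps lam a)
    (fun _ _ hab => hab.excess_le hps) (fun _ _ _ hab hbc lam => (hbc lam).trans (hab lam))
    (by
      simp only [Set.ofPred_forall]
      exact isClosed_iInter fun lam => isClosed_le ((continuous_excess lam).comp continuous_snd)
        ((continuous_excess lam).comp continuous_fst)) h lam

end MarkovOrder

section LevelExcess

variable {n : ℕ}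

/-- For `r = p0 / ps`, this is the right derivative of `excess ps R` at `p0` in the direction `v`;
since `excess ps R` is convex it is bounded by `excess ps R (p0 + v) - excess ps R p0`. -/
noncomputable def levelExcess (r v : Fin n → ℝ) (R : ℝ) : ℝ :=
  ∑ i, if R < r i then v i else if r i = R then max (v i) 0 else 0

theorem excess_add_levelExcess_le {ps : Fin n → ℝ} (hps : ∀ i, 0 < ps i) (p0 p1 : Fin n → ℝ)
    (R : ℝ) : excess ps R p0 + levelExcess (fun i => p0 i / ps i) (p1 - p0) R ≤ excess ps R p1 := by
  rw [excess, levelExcess, excess, ← Finset.sum_add_distrib]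
  refine Finset.sum_le_sum fun i _ => ?_
  have hps' := hps i
  simp only [Pi.sub_apply]
  split_ifs with hlt heq
  · rw [lt_div_iff₀ hps'] at hlt
    rw [max_eq_left (by linarith)]
    linarith [le_max_left (p1 i - R * ps i) 0]
  · rw [div_eq_iff hps'.ne'] at heq
    rw [heq, sub_self, max_self, zero_add]
  · have hlt' : p0 i < R * ps i := (div_lt_iff₀ hps').1 (lt_of_le_of_ne (not_lt.1 hlt) heq)
    rw [max_eq_right (by linarith), add_zero]
    exact le_max_right _ _

end LevelExcess

section VelocityCone

variable {n : ℕ} (r : Fin n → ℝ)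

def transferVec (i j : Fin n) : Fin n → ℝ :=
  fun l => (if l = i then 1 else 0) - if l = j then 1 else 0

theorem transferVec_swap (i j : Fin n) : transferVec j i = -transferVec i j := by
  ext l
  simp [transferVec]

variable {a b : Fin n}

theorem transferVec_apply_left (hab : a ≠ b) : transferVec a b a = 1 := by
  simp [transferVec, hab]

theorem transferVec_apply_right (hab : a ≠ b) : transferVec a b b = -1 := by
  simp [transferVec, hab.symm]

theorem transferVec_apply_of_ne {i : Fin n} (hia : i ≠ a) (hib : i ≠ b) : transferVec a b i = 0 := by
  simp [transferVec, hia, hib]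

theorem sum_transferVec (i j : Fin n) : ∑ l, transferVec i j l = 0 := by
  simp [transferVec, Finset.sum_sub_distrib]

noncomputable def velocityGen (x : Fin n × Fin n) : Fin n → ℝ :=
  if x.2 < x.1 then Real.sign (r x.2 - r x.1) • transferVec x.1 x.2 else 0

/-- The cone `Q(P⁰, P*)` for `r = p⁰ / p*`. -/
noncomputable def velocityCone : Submodule ℝ≥0 (Fin n → ℝ) :=
  Submodule.span ℝ≥0 (Set.range (velocityGen r))

variable {r}

theorem transferVec_mem_velocityCone {i j : Fin n} (h : r i < r j) :
    transferVec i j ∈ velocityCone r := by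
  refine Submodule.subset_span ?_
  rcases lt_or_gt_of_ne (ne_of_apply_ne r h.ne) with hij | hji
  · refine ⟨(j, i), ?_⟩
    rw [velocityGen, if_pos hij, Real.sign_of_neg (sub_neg.2 h), transferVec_swap, neg_one_smul,
      neg_neg]
  · refine ⟨(i, j), ?_⟩
    rw [velocityGen, if_pos hji, Real.sign_of_pos (sub_pos.2 h), one_smul]

theorem exists_eq_sum_of_mem_velocityCone {v : Fin n → ℝ} (hv : v ∈ velocityCone r) :
    ∃ w : Fin n → Fin n → ℝ, (∀ i j, 0 ≤ w i j) ∧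
      v = ∑ i, ∑ j ∈ Finset.univ.filter (fun j => j < i),
        (w i j * Real.sign (r j - r i)) • transferVec i j := by
  obtain ⟨c, rfl⟩ := (Submodule.mem_span_range_iff_exists_fun ℝ≥0).1 hv
  refine ⟨fun i j => c (i, j), fun i j => (c (i, j)).2, ?_⟩
  rw [Fintype.sum_prod_type]
  refine Finset.sum_congr rfl fun i _ => ?_
  rw [Finset.sum_filter]
  refine Finset.sum_congr rfl fun j _ => ?_
  rw [velocityGen, NNReal.smul_def]
  split_ifs <;> simp [mul_smul]

end VelocityCone

section Transfer

variable {n : ℕ} {r v : Fin n → ℝ}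

theorem exists_transfer_of_levelExcess_nonpos (hlevel : ∀ R, levelExcess r v R ≤ 0)
    (hpos : ∃ i, 0 < v i) :
    ∃ a b, 0 < v a ∧ v b < 0 ∧ r a < r b ∧ ∀ i, r a < r i → v i ≤ 0 := by
  obtain ⟨a, ha, hmax⟩ := Finset.exists_max_image (Finset.univ.filter fun i => 0 < v i) r
    (by simpa [Finset.Nonempty] using hpos)
  simp only [Finset.mem_filter, Finset.mem_univ, true_and] at ha hmax
  have htop : ∀ i, r a < r i → v i ≤ 0 := fun i hi => not_lt.1 fun hvi => (hmax i hvi).not_gt hi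
  suffices ∃ b, v b < 0 ∧ r a < r b by
    obtain ⟨b, hb, hab⟩ := this
    exact ⟨a, b, ha, hb, hab, htop⟩
  by_contra! hno
  have hterm : ∀ i, 0 ≤ if r a < r i then v i else if r i = r a then max (v i) 0 else 0 := by
    intro i
    split_ifs with h
    · exact not_lt.1 fun hvi => (hno i hvi).not_gt h
    · exact le_max_right _ _
    · exact le_rfl
  have hva : v a ≤ levelExcess r v (r a) :=
    calc v a = if r a < r a then v a else if r a = r a then max (v a) 0 else 0 := by
          simp [ha.le]
      _ ≤ levelExcess r v (r a) := Finset.single_le_sum (fun i _ => hterm i) (Finset.mem_univ a)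
  linarith [hlevel (r a)]

theorem levelExcess_sub_smul_transferVec_nonpos (hlevel : ∀ R, levelExcess r v R ≤ 0) {a b : Fin n}
    {t : ℝ} (hab : r a < r b) (htop : ∀ i, r a < r i → v i ≤ 0) (ht0 : 0 ≤ t) (hta : t ≤ v a)
    (htb : t ≤ -v b) (R : ℝ) : levelExcess r (v - t • transferVec a b) R ≤ 0 := by
  have hne : a ≠ b := ne_of_apply_ne r hab.ne
  have happly : ∀ i, (v - t • transferVec a b) i = v i - t * transferVec a b i := fun i => rfl
  rcases le_or_gt R (r a) with hR | hR
  · have hterm : ∀ i, (if R < r i then (v - t • transferVec a b) i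
          else if r i = R then max ((v - t • transferVec a b) i) 0 else 0)
        = (if R < r i then v i else if r i = R then max (v i) 0 else 0) - t * transferVec a b i := by
      intro i
      rw [happly]
      by_cases hia : i = a
      · subst hia
        rw [transferVec_apply_left hne, mul_one]
        rcases hR.lt_or_eq with hlt | heq
        · simp [hlt]
        · simp only [heq, lt_irrefl, if_false, if_true]
          rw [max_eq_left (by linarith), max_eq_left (by linarith)]
      by_cases hib : i = b
      · subst hib
        simp [transferVec_apply_right hne, hR.trans_lt hab]
      · simp [transferVec_apply_of_ne hia hib]
    rw [levelExcess, Finset.sum_congr rfl fun i _ => hterm i, Finset.sum_sub_distrib,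
      ← Finset.mul_sum, sum_transferVec, mul_zero, sub_zero]
    exact hlevel R
  · have hvtop : ∀ i, r a < r i → (v - t • transferVec a b) i ≤ 0 := by
      intro i hi
      rw [happly]
      by_cases hib : i = b
      · subst hib
        rw [transferVec_apply_right hne]
        linarith
      · rw [transferVec_apply_of_ne (ne_of_apply_ne r hi.ne') hib, mul_zero, sub_zero]
        exact htop i hi
    refine Finset.sum_nonpos fun i _ => ?_
    split_ifs with h1 h2
    · exact hvtop i (hR.trans h1)
    · exact max_le (hvtop i (h2 ▸ hR)) le_rfl
    · exact le_rfl

theorem mem_velocityCone_of_levelExcess_nonpos (hsum : ∑ i, v i = 0)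
    (hlevel : ∀ R, levelExcess r v R ≤ 0) : v ∈ velocityCone r := by
  induction hk : (Finset.univ.filter fun i => v i ≠ 0).card using Nat.strong_induction_on
    generalizing v with
  | _ k ih =>
  by_cases hpos : ∃ i, 0 < v i
  swap
  · simp only [not_exists, not_lt] at hpos
    have hv : v = 0 := funext fun i =>
      (Finset.sum_eq_zero_iff_of_nonpos fun i _ => hpos i).1 hsum i (Finset.mem_univ i)
    exact hv ▸ zero_mem _
  obtain ⟨a, b, ha, hb, hab, htop⟩ := exists_transfer_of_levelExcess_nonpos hlevel hpos
  have hne : a ≠ b := ne_of_apply_ne r hab.ne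
  -- remove the largest admissible multiple of `transferVec a b`; it empties `a` or `b`
  set t := min (v a) (-v b)
  have ht0 : 0 ≤ t := le_min ha.le (by linarith)
  set v' := v - t • transferVec a b
  have happly : ∀ i, v' i = v i - t * transferVec a b i := fun i => rfl
  have hsupp : (Finset.univ.filter fun i => v' i ≠ 0) ⊂ Finset.univ.filter fun i => v i ≠ 0 := by
    refine (Finset.ssubset_iff_of_subset fun i => ?_).2 ?_
    · simp only [Finset.mem_filter, Finset.mem_univ, true_and]
      intro hi
      by_cases hia : i = a
      · exact hia ▸ ha.ne'
      by_cases hib : i = b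
      · exact hib ▸ hb.ne
      rwa [happly, transferVec_apply_of_ne hia hib, mul_zero, sub_zero] at hi
    · simp only [Finset.mem_filter, Finset.mem_univ, true_and, not_not]
      rcases min_choice (v a) (-v b) with h | h <;> change t = _ at h
      · exact ⟨a, ha.ne', by rw [happly, transferVec_apply_left hne, mul_one, h, sub_self]⟩
      · exact ⟨b, hb.ne, by rw [happly, transferVec_apply_right hne, h]; ring⟩
  have hv' : v' ∈ velocityCone r :=
    ih _ (hk ▸ Finset.card_lt_card hsupp)
      (by simp [v', Finset.sum_sub_distrib, ← Finset.mul_sum, sum_transferVec, hsum])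
      (levelExcess_sub_smul_transferVec_nonpos hlevel hab htop ht0 (min_le_left _ _)
        (min_le_right _ _)) rfl
  have hv : v = v' + (⟨t, ht0⟩ : ℝ≥0) • transferVec a b := (sub_add_cancel v _).symm
  rw [hv]
  exact add_mem hv' (Submodule.smul_mem _ _ (transferVec_mem_velocityCone hab))

end Transfer

theorem markov_order_subset_velocity_cone_general
    (n : ℕ) (ps : Fin n → ℝ) (hps : ∀ i, 0 < ps i)
    (p0 p1 : Fin n → ℝ)
    (horder : MarkovOrder ps p0 p1) :
    ∃ w : Fin n → Fin n → ℝ, (∀ i j, 0 ≤ w i j) ∧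
      p1 - p0 = ∑ i, ∑ j ∈ Finset.univ.filter (fun j => j < i),
        (w i j * Real.sign (p0 j / ps j - p0 i / ps i)) •
          (fun l => (if l = i then (1 : ℝ) else 0) - if l = j then 1 else 0) := by
  have hsum : ∑ i, (p1 - p0) i = 0 := by
    simp [Finset.sum_sub_distrib, horder.sum_eq hps]
  have hlevel : ∀ R, levelExcess (fun i => p0 i / ps i) (p1 - p0) R ≤ 0 := fun R => by
    linarith [excess_add_levelExcess_le hps p0 p1 R, horder.excess_le hps R]
  exact exists_eq_sum_of_mem_velocityCone (mem_velocityCone_of_levelExcess_nonpos hsum hlevel)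

/-- If `P⁰ ≻_{P*} P¹` then `P¹ − P⁰` lies in the cone
`Q(P⁰,P*) = cone{(eᵢ−e_j)·sign(p⁰_j/p*_j − p⁰ᵢ/p*ᵢ) : i > j}` of possible
Markov velocities at `P⁰`. -/
theorem markov_order_subset_velocity_cone
    (n : ℕ) (ps : Fin n → ℝ) (hps : ∀ i, 0 < ps i)
    (p0 p1 : Fin n → ℝ) (hp0 : ∀ i, 0 < p0 i) (hp01 : ∑ i, p0 i = 1)
    (horder : MarkovOrder ps p0 p1) :
    ∃ w : Fin n → Fin n → ℝ, (∀ i j, 0 ≤ w i j) ∧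
      p1 - p0 = ∑ i, ∑ j ∈ Finset.univ.filter (fun j => j < i),
        (w i j * Real.sign (p0 j / ps j - p0 i / ps i)) •
          (fun l => (if l = i then (1 : ℝ) else 0) - if l = j then 1 else 0) :=
  markov_order_subset_velocity_cone_general n ps hps p0 p1 horder
end
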